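/- arXiv:0804.2335 — 4 statements merged into one kernel-verified Lean document; each statement's English description precedes it below -/
import Mathlib

section
/- For the relative theory F_M induced by a Λ-module M, the F_M-projective modules are exactly the modules in add(Λ ⊕ M); that is, P(F_M) = P(Λ) ∪ add M. -/
open CategoryTheory

universe u
variable {Λ : Type} [Ring Λ]

namespace RelHom


/-- `X` belongs to `add M`: it is a direct summand of a finite direct sum of copies of `M`. -/
def InAdd (M X : ModuleCat Λ) : Prop :=
  ∃ (n : ℕ) (s : X ⟶ ModuleCat.of Λ (Fin n → M)) (r : ModuleCat.of Λ (Fin n → M) ⟶ X),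
    s ≫ r = 𝟙 X

/-- `0 → A → B → C → 0` is a short exact sequence. -/
structure IsSES {A B C : ModuleCat Λ} (i : A ⟶ B) (p : B ⟶ C) : Prop where
  inj : Function.Injective i
  surj : Function.Surjective p
  exact : Function.Exact i p

/-- A "relative theory": a class of short exact sequences. -/
abbrev ExtPred (Λ : Type) [Ring Λ] :=
  ∀ (A B C : ModuleCat Λ), (A ⟶ B) → (B ⟶ C) → Prop

/-- The class of all short exact sequences (the absolute theory). -/
def Fall : ExtPred Λ := fun _ _ _ i p => IsSES i p

/-- The relative theory `F_M`: short exact sequences on which `Hom(M,-)` is exact. -/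
def FM (M : ModuleCat Λ) : ExtPred Λ := fun _ B C i p =>
  IsSES i p ∧ ∀ f : M ⟶ C, ∃ g : M ⟶ B, g ≫ p = f

/-- The relative theory `F^M`: short exact sequences on which `Hom(-,M)` is exact. -/
def Fco (M : ModuleCat Λ) : ExtPred Λ := fun A B _ i p =>
  IsSES i p ∧ ∀ f : A ⟶ M, ∃ g : B ⟶ M, i ≫ g = f

/-- `P` is projective relative to the theory `F`. -/
def IsRelProjective (F : ExtPred Λ) (P : ModuleCat Λ) : Prop :=
  ∀ ⦃A B C : ModuleCat Λ⦄ (i : A ⟶ B) (p : B ⟶ C), F A B C i p →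
    ∀ f : P ⟶ C, ∃ g : P ⟶ B, g ≫ p = f

/-- `I` is injective relative to the theory `F`. -/
def IsRelInjective (F : ExtPred Λ) (I : ModuleCat Λ) : Prop :=
  ∀ ⦃A B C : ModuleCat Λ⦄ (i : A ⟶ B) (p : B ⟶ C), F A B C i p →
    ∀ f : A ⟶ I, ∃ g : B ⟶ I, i ≫ g = f

/-- `relExtVanish F n X Y` says that the relative extension group `Ext_F^{n+1}(X,Y)`
vanishes; it is defined by dimension shifting along `F`-exact sequences with
`F`-projective middle term. -/
def relExtVanish (F : ExtPred Λ) : ℕ → ModuleCat Λ → ModuleCat Λ → Prop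
  | 0, X, Y => ∀ (B : ModuleCat Λ) (i : Y ⟶ B) (p : B ⟶ X), F Y B X i p →
      ∃ r : B ⟶ Y, i ≫ r = 𝟙 Y
  | n+1, X, Y => ∀ (K P : ModuleCat Λ) (i : K ⟶ P) (p : P ⟶ X),
      F K P X i p → IsRelProjective F P → relExtVanish F n K Y

/-- `Ext_F^i(X,Y) = 0` for all `0 < i ≤ l`. -/
def extVanishUpTo (F : ExtPred Λ) (l : ℕ) (X Y : ModuleCat Λ) : Prop :=
  ∀ i < l, relExtVanish F i X Y

/-- The relative projective dimension of `X` is at most `n`. -/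
def relPdLE (F : ExtPred Λ) : ModuleCat Λ → ℕ → Prop
  | X, 0 => IsRelProjective F X
  | X, n+1 => (∃ (K P : ModuleCat Λ) (i : K ⟶ P) (p : P ⟶ X),
      F K P X i p ∧ IsRelProjective F P ∧ relPdLE F K n)

/-- The relative injective dimension of `X` is at most `n`. -/
def relIdLE (F : ExtPred Λ) : ModuleCat Λ → ℕ → Prop
  | X, 0 => IsRelInjective F X
  | X, n+1 => (∃ (I K : ModuleCat Λ) (i : X ⟶ I) (p : I ⟶ K),
      F X I K i p ∧ IsRelInjective F I ∧ relIdLE F K n)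

/-- The relative global dimension of `Λ` (on `mod Λ`) is at most `n`. -/
def relGldimLE (F : ExtPred Λ) (n : ℕ) : Prop :=
  ∀ X : ModuleCat Λ, Module.Finite Λ X → relPdLE F X n

/-- The global dimension of the ring `Γ` is at most `n`. -/
def GldimLE (Γ : Type) [Ring Γ] (n : ℕ) : Prop :=
  ∀ X : ModuleCat.{0} Γ, Module.Finite Γ X → relPdLE (Fall) X n

/-- `M` is a generator for `mod Λ`: `add M` contains all f.g. projectives. -/
def IsGenerator (M : ModuleCat Λ) : Prop :=
  ∀ P : ModuleCat Λ, Module.Finite Λ P → Module.Projective Λ P → InAdd M P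

/-- `M` is a cogenerator for `mod Λ`: `add M` contains all f.g. injectives. -/
def IsCogenerator (M : ModuleCat Λ) : Prop :=
  ∀ I : ModuleCat Λ, Module.Finite Λ I → Module.Injective Λ I → InAdd M I

/-- generator-cogenerator for `mod Λ`. -/
def IsGenCogen (M : ModuleCat Λ) : Prop := IsGenerator M ∧ IsCogenerator M

/-- `M` is a maximal `l`-orthogonal `Λ`-module. -/
def IsMaxOrthogonal (l : ℕ) (M : ModuleCat Λ) : Prop :=
  Module.Finite Λ M ∧
  (∀ Y : ModuleCat Λ, Module.Finite Λ Y → (extVanishUpTo Fall l M Y ↔ InAdd M Y)) ∧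
  (∀ X : ModuleCat Λ, Module.Finite Λ X → (extVanishUpTo Fall l X M ↔ InAdd M X))

/-- `X` admits an `F`-exact `add T`-resolution of length `≤ n`. -/
def relAddResolLE (F : ExtPred Λ) (T : ModuleCat Λ) : ModuleCat Λ → ℕ → Prop
  | X, 0 => InAdd T X
  | X, n+1 => InAdd T X ∨ (∃ (K T₀ : ModuleCat Λ) (i : K ⟶ T₀) (p : T₀ ⟶ X),
      F K T₀ X i p ∧ InAdd T T₀ ∧ relAddResolLE F T K n)

/-- `X` admits an `F`-exact `add T`-coresolution of length `≤ n`. -/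
def relAddCoresolLE (F : ExtPred Λ) (T : ModuleCat Λ) : ModuleCat Λ → ℕ → Prop
  | X, 0 => InAdd T X
  | X, n+1 => InAdd T X ∨ (∃ (T₀ K : ModuleCat Λ) (i : X ⟶ T₀) (p : T₀ ⟶ K),
      F X T₀ K i p ∧ InAdd T T₀ ∧ relAddCoresolLE F T K n)

/-- `T` is an `F`-cotilting module. -/
def IsRelCotilting (F : ExtPred Λ) (T : ModuleCat Λ) : Prop :=
  (∀ i, relExtVanish F i T T) ∧ (∃ n, relIdLE F T n) ∧
  (∀ I : ModuleCat Λ, Module.Finite Λ I → IsRelInjective F I → ∃ n, relAddResolLE F T I n)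

/-- `T` is an `F`-tilting module. -/
def IsRelTilting (F : ExtPred Λ) (T : ModuleCat Λ) : Prop :=
  (∀ i, relExtVanish F i T T) ∧ (∃ n, relPdLE F T n) ∧
  (∀ P : ModuleCat Λ, Module.Finite Λ P → IsRelProjective F P → ∃ n, relAddCoresolLE F T P n)

/-- A cotilting module over a ring `Γ`. -/
def IsCotilting {Γ : Type} [Ring Γ] (C : ModuleCat.{0} Γ) : Prop :=
  IsRelCotilting (Fall) C


/-- Right multiplication (precomposition) on `Λ`-duals. -/
def rmulTest {P₁ P₀ : Type} [AddCommGroup P₁] [Module Λ P₁] [AddCommGroup P₀] [Module Λ P₀]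
    (f : P₁ →ₗ[Λ] P₀) : ((P₀ →ₗ[Λ] Λ) →ₗ[Λᵐᵒᵖ] (P₁ →ₗ[Λ] Λ)) where
  toFun g := g.comp f
  map_add' _ _ := rfl
  map_smul' _ _ := rfl

abbrev TransposeOf {P₁ P₀ : Type} [AddCommGroup P₁] [Module Λ P₁] [AddCommGroup P₀] [Module Λ P₀]
    (f : P₁ →ₗ[Λ] P₀) : Type :=
  (P₁ →ₗ[Λ] Λ) ⧸ LinearMap.range (rmulTest f)

def IsSuperfluous {P : Type} [AddCommGroup P] [Module Λ P] (N : Submodule Λ P) : Prop :=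
  ∀ K : Submodule Λ P, N ⊔ K = ⊤ → K = ⊤

def IsInjEnvelopeOfCosocle (R : Type) [CommRing R] (E : Type) [AddCommGroup E] [Module R E] :
    Prop :=
  Module.Injective R E ∧
  ∃ φ : (R ⧸ (Ideal.jacobson (⊥ : Ideal R))) →ₗ[R] E, Function.Injective φ ∧
    ∀ N : Submodule R E, N ≠ ⊥ → ∃ x ∈ N, x ≠ 0 ∧ x ∈ LinearMap.range φ

/-- `τ` is (a representative of) the Auslander-Reiten translate `DTr M`. -/
def IsDTrOf (R : Type) [CommRing R] (Λ : Type) [Ring Λ] [Algebra R Λ]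
    (M τ : ModuleCat Λ) : Prop :=
  ∃ (E : Type) (_ : AddCommGroup E) (_ : Module R E), IsInjEnvelopeOfCosocle R E ∧
  ∃ (P₁ P₀ : Type) (_ : AddCommGroup P₁) (_ : Module Λ P₁) (_ : AddCommGroup P₀)
    (_ : Module Λ P₀) (f : P₁ →ₗ[Λ] P₀) (g : P₀ →ₗ[Λ] M),
    Module.Finite Λ P₁ ∧ Module.Projective Λ P₁ ∧ Module.Finite Λ P₀ ∧
    Module.Projective Λ P₀ ∧ Function.Surjective g ∧ Function.Exact f g ∧
    IsSuperfluous (LinearMap.ker g) ∧ IsSuperfluous (LinearMap.ker f) ∧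
    ∃ e : τ ≃+ (TransposeOf f →ₗ[R] E),
      ∀ (a : Λ) (x : τ) (y : TransposeOf f), e (a • x) y = e x (MulOpposite.op a • y)


end RelHom


namespace StmtAux

variable {R : Type*} [CommRing R]

lemma mk_smul_eq {J : Ideal R} {X : Type*} [AddCommGroup X] [Module R X]
    [Module (R ⧸ J) X] [IsScalarTower R (R ⧸ J) X] (r : R) (x : X) :
    (Ideal.Quotient.mk J r) • x = r • x := by
  have h1 : (Ideal.Quotient.mk J r) = r • (1 : R ⧸ J) := by
    rw [← Algebra.algebraMap_eq_smul_one, ← Ideal.Quotient.algebraMap_eq]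
  rw [h1, smul_assoc, one_smul]

def quotSubmodule (J : Ideal R) {X : Type*} [AddCommGroup X] [Module R X]
    [Module (R ⧸ J) X] [IsScalarTower R (R ⧸ J) X] (N : Submodule R X) :
    Submodule (R ⧸ J) X where
  carrier := N
  add_mem' := fun ha hb => N.add_mem ha hb
  zero_mem' := N.zero_mem
  smul_mem' := fun q x hx => by
    obtain ⟨r, rfl⟩ := Ideal.Quotient.mk_surjective q
    show (Ideal.Quotient.mk J r) • x ∈ N
    rw [mk_smul_eq]
    exact N.smul_mem r hx

lemma isNoetherian_of_quot (J : Ideal R) (X : Type*) [AddCommGroup X] [Module R X]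
    [Module (R ⧸ J) X] [IsScalarTower R (R ⧸ J) X] [IsNoetherian (R ⧸ J) X] :
    IsNoetherian R X := by
  rw [isNoetherian_def]
  intro N
  obtain ⟨s, hs⟩ := IsNoetherian.noetherian (quotSubmodule J N)
  refine ⟨s, le_antisymm (Submodule.span_le.mpr fun x hx => ?_) fun x hx => ?_⟩
  · have : x ∈ quotSubmodule J N := hs ▸ Submodule.subset_span hx
    exact this
  · have hx' : x ∈ Submodule.span (R ⧸ J) (s : Set X) := by rw [hs]; exact hx
    clear hx
    induction hx' using Submodule.span_induction with
    | mem y hy => exact Submodule.subset_span hy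
    | zero => exact Submodule.zero_mem _
    | add y z _ _ hy hz => exact Submodule.add_mem _ hy hz
    | smul q y _ hy =>
      obtain ⟨r, rfl⟩ := Ideal.Quotient.mk_surjective q
      rw [mk_smul_eq]
      exact Submodule.smul_mem _ r hy

lemma hopkins_aux [IsArtinianRing R] :
    ∀ (n : ℕ) (X : Type*) [AddCommGroup X] [Module R X], IsArtinian R X →
      ((⊥ : Ideal R).jacobson ^ n • (⊤ : Submodule R X) = ⊥) → IsNoetherian R X := by
  intro n
  induction n with
  | zero =>
    intro X _ _ _ h
    rw [pow_zero, Ideal.one_eq_top, Submodule.top_smul] at h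
    haveI : Subsingleton X := by
      refine subsingleton_of_forall_eq 0 fun x => ?_
      have : x ∈ (⊥ : Submodule R X) := h ▸ Submodule.mem_top
      simpa using this
    haveI : Finite X := Finite.of_subsingleton
    exact isNoetherian_of_finite R X
  | succ n ih =>
    intro X _ _ hart h
    haveI : IsArtinian R X := hart
    set J : Ideal R := (⊥ : Ideal R).jacobson with hJ
    set K : Submodule R X := J • ⊤ with hK
    have hKn : IsNoetherian R K := by
      refine ih K inferInstance ?_
      have hmap : (J ^ n • (⊤ : Submodule R K)).map K.subtype = ⊥ := by
        rw [Submodule.map_smul'', Submodule.map_top, Submodule.range_subtype]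
        rw [← mul_smul, ← pow_succ, h]
      rw [eq_bot_iff]
      intro x hx
      have : (x : X) ∈ (J ^ n • (⊤ : Submodule R K)).map K.subtype :=
        ⟨x, hx, rfl⟩
      rw [hmap] at this
      rw [Submodule.mem_bot]
      exact Subtype.ext ((Submodule.mem_bot R).mp this)
    letI modQ : Module (R ⧸ J) (X ⧸ K) :=
      (Module.isTorsionBySet_quotient_ideal_smul X J).module
    haveI towQ : IsScalarTower R (R ⧸ J) (X ⧸ K) := by
      constructor
      intro r q x
      obtain ⟨c, rfl⟩ := Ideal.Quotient.mk_surjective q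
      obtain ⟨y, rfl⟩ := Submodule.Quotient.mk_surjective K x
      have h1 : (r • Ideal.Quotient.mk J c) = Ideal.Quotient.mk J (r * c) := by
        rw [← Ideal.Quotient.algebraMap_eq, Algebra.smul_def, map_mul]
      rw [h1]
      show Submodule.Quotient.mk ((r * c) • y) = r • Submodule.Quotient.mk (c • y)
      rw [mul_smul, Submodule.Quotient.mk_smul]
    haveI : IsReduced (R ⧸ J) :=
      (Ideal.isRadical_iff_quotient_reduced J).mp (Ideal.isRadical_jacobson ⊥)
    haveI : IsSemisimpleRing (R ⧸ J) := IsArtinianRing.isSemisimpleRing_of_isReduced (R ⧸ J)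
    haveI hartQ : IsArtinian (R ⧸ J) (X ⧸ K) := isArtinian_of_tower R inferInstance
    haveI : IsNoetherian (R ⧸ J) (X ⧸ K) :=
      ((IsSemisimpleModule.finite_tfae (R := R ⧸ J) (M := X ⧸ K)).out 1 2).mpr hartQ
    have hQn : IsNoetherian R (X ⧸ K) := isNoetherian_of_quot J (X ⧸ K)
    exact (isNoetherian_iff_submodule_quotient K).mpr ⟨hKn, hQn⟩

lemma hopkins (R : Type*) [CommRing R] [IsArtinianRing R] (X : Type*) [AddCommGroup X]
    [Module R X] [Module.Finite R X] : IsNoetherian R X := by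
  obtain ⟨n, hn⟩ := IsArtinianRing.isNilpotent_jacobson_bot (R := R)
  refine hopkins_aux n X inferInstance ?_
  rw [hn, Ideal.zero_eq_bot, Submodule.bot_smul]





variable {Λ : Type*} [Ring Λ] {M B C : Type*} [AddCommGroup M] [Module Λ M]
  [AddCommGroup B] [Module Λ B] [AddCommGroup C] [Module Λ C]

def combo {n : ℕ} (b : Fin n → B) (h : Fin n → (M →ₗ[Λ] B)) :
    (Fin n → Λ × M) →ₗ[Λ] B where
  toFun v := ∑ i, ((v i).1 • b i + h i (v i).2)
  map_add' x y := by
    rw [← Finset.sum_add_distrib]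
    refine Finset.sum_congr rfl fun i _ => ?_
    simp only [Pi.add_apply, Prod.fst_add, Prod.snd_add, add_smul, map_add]
    abel
  map_smul' a v := by
    simp only [Pi.smul_apply, Prod.smul_fst, Prod.smul_snd, smul_eq_mul, RingHom.id_apply,
      Finset.smul_sum, smul_add, mul_smul, map_smul]

lemma combo_single {n : ℕ} (b : Fin n → B) (h : Fin n → (M →ₗ[Λ] B)) (j : Fin n)
    (a : Λ) (x : M) : combo b h (Pi.single j (a, x)) = a • b j + h j x := by
  classical
  have hdef : combo b h (Pi.single j (a, x)) =
      ∑ i, (((Pi.single j ((a, x) : Λ × M) : Fin n → Λ × M) i).1 • b i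
        + h i ((Pi.single j ((a, x) : Λ × M) : Fin n → Λ × M) i).2) := rfl
  rw [hdef, Finset.sum_eq_single j]
  · rw [Pi.single_eq_same]
  · intro i _ hij
    rw [Pi.single_eq_of_ne hij]
    simp
  · intro hj
    exact absurd (Finset.mem_univ j) hj

lemma apply_eq {n : ℕ} (q : (Fin n → Λ × M) →ₗ[Λ] C) (v : Fin n → Λ × M) :
    q v = ∑ i, ((v i).1 • q (Pi.single i (1, 0)) + q (Pi.single i (0, (v i).2))) := by
  classical
  conv_lhs => rw [← Finset.univ_sum_single v, map_sum]
  refine Finset.sum_congr rfl fun i _ => ?_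
  have h3 : (v i) = (((v i).1 : Λ), (0 : M)) + ((0 : Λ), (v i).2) := by
    ext <;> simp
  have h2 : (((v i).1 : Λ), (0 : M)) = (v i).1 • ((1 : Λ), (0 : M)) := by
    simp [Prod.smul_mk]
  calc q (Pi.single i (v i))
      = q (Pi.single i ((((v i).1 : Λ), (0 : M)) + ((0 : Λ), (v i).2))) := by rw [← h3]
    _ = q (Pi.single i (((v i).1, (0 : M)))) + q (Pi.single i ((0 : Λ), (v i).2)) := by
        rw [Pi.single_add, map_add]
    _ = (v i).1 • q (Pi.single i ((1 : Λ), (0 : M))) + q (Pi.single i ((0 : Λ), (v i).2)) := by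
        rw [h2, Pi.single_smul, map_smul]

def cmul (R : Type*) [CommRing R] (Λ : Type*) [Ring Λ] [Algebra R Λ]
    {M : Type*} [AddCommGroup M] [Module Λ M] (r : R) : M →ₗ[Λ] M where
  toFun x := algebraMap R Λ r • x
  map_add' x y := smul_add _ x y
  map_smul' a x := by
    simp only [RingHom.id_apply, ← mul_smul, Algebra.commutes]

end StmtAux


open RelHom in
/-- `P(F_M) = add (Λ ⊕ M)`: the `F_M`-projectives are exactly the modules in `add (Λ ⊕ M)`. -/
theorem stmt2 (R : Type) [CommRing R] [IsArtinianRing R] (Λ : Type) [Ring Λ] [Algebra R Λ]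
    [Module.Finite R Λ]
    (M : ModuleCat Λ) (hM : Module.Finite Λ M)
    (P : ModuleCat Λ) (hP : Module.Finite Λ P) :
    IsRelProjective (FM M) P ↔ InAdd (ModuleCat.of Λ (Λ × M)) P := by
  classical
  constructor
  · intro hproj
    -- set up the `R`-module structures
    letI modR : Module R P := Module.compHom P (algebraMap R Λ)
    haveI towRΛP : IsScalarTower R Λ P := ⟨fun r a x => by
      show (r • a) • x = algebraMap R Λ r • (a • x)
      rw [Algebra.smul_def, mul_smul]⟩
    haveI commΛR : SMulCommClass Λ R P := ⟨fun a r x => by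
      show a • (algebraMap R Λ r • x) = algebraMap R Λ r • (a • x)
      rw [← mul_smul, ← Algebra.commutes, mul_smul]⟩
    haveI finRP : Module.Finite R P := Module.Finite.trans Λ P
    haveI noethP : IsNoetherian R P := StmtAux.hopkins R P
    -- `Hom_Λ(M, P)` is a finitely generated `R`-module
    obtain ⟨km, gm, hgm⟩ := Module.Finite.exists_fin (R := Λ) (M := M)
    let ev : (M →ₗ[Λ] P) →ₗ[R] (Fin km → P) :=
      { toFun := fun f => fun i => f (gm i)
        map_add' := fun f g => rfl
        map_smul' := fun r f => rfl }
    have hev : Function.Injective ev := by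
      intro f g hfg
      ext x
      have hx : x ∈ Submodule.span Λ (Set.range gm) := by
        rw [hgm]; exact Submodule.mem_top
      induction hx using Submodule.span_induction with
      | mem y hy => obtain ⟨i, rfl⟩ := hy; exact congrFun hfg i
      | zero => rw [map_zero, map_zero]
      | add y z _ _ hy hz => rw [map_add, map_add, hy, hz]
      | smul a y _ hy => rw [map_smul, map_smul, hy]
    haveI finH : Module.Finite R (M →ₗ[Λ] P) := Module.Finite.of_injective ev hev
    obtain ⟨m, gh, hgh⟩ := Module.Finite.exists_fin (R := R) (M := (M →ₗ[Λ] P))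
    obtain ⟨k, gp, hgp⟩ := Module.Finite.exists_fin (R := Λ) (M := P)
    -- the `F_M`-exact sequence onto `P`
    obtain ⟨p0, hp0⟩ : ∃ p0 : (Fin (k + m) → Λ × M) →ₗ[Λ] P,
        p0 = StmtAux.combo (Fin.append gp (fun _ => (0 : P)))
          (Fin.append (fun _ => (0 : M →ₗ[Λ] P)) gh) := ⟨_, rfl⟩
    have hsurj : Function.Surjective p0 := by
      have hle : Submodule.span Λ (Set.range gp) ≤ LinearMap.range p0 := by
        rw [Submodule.span_le]
        rintro y ⟨j, rfl⟩
        refine ⟨Pi.single (Fin.castAdd m j) ((1 : Λ), (0 : M)), ?_⟩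
        rw [hp0, StmtAux.combo_single, one_smul, map_zero, add_zero, Fin.append_left]
      intro x
      have hx : x ∈ Submodule.span Λ (Set.range gp) := by
        rw [hgp]; exact Submodule.mem_top
      exact hle hx
    have hlifts : ∀ f : M →ₗ[Λ] P, ∃ g : M →ₗ[Λ] (Fin (k + m) → Λ × M),
        p0.comp g = f := by
      intro f
      have hf : f ∈ Submodule.span R (Set.range gh) := by
        rw [hgh]; exact Submodule.mem_top
      obtain ⟨c, hc⟩ := (Submodule.mem_span_range_iff_exists_fun R).mp hf
      refine ⟨∑ j : Fin m, (LinearMap.single Λ (fun _ => Λ × M) (Fin.natAdd k j)).comp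
          ((LinearMap.inr Λ Λ M).comp (StmtAux.cmul R Λ (c j))), ?_⟩
      ext x
      rw [LinearMap.comp_apply, LinearMap.sum_apply, map_sum, ← hc, LinearMap.sum_apply]
      refine Finset.sum_congr rfl fun j _ => ?_
      have h1 : ((LinearMap.single Λ (fun _ => Λ × M) (Fin.natAdd k j)).comp
          ((LinearMap.inr Λ Λ M).comp (StmtAux.cmul R Λ (c j)))) x
          = Pi.single (Fin.natAdd k j) (((0 : Λ), algebraMap R Λ (c j) • x) : Λ × M) := rfl
      rw [h1, hp0, StmtAux.combo_single, zero_smul, zero_add, Fin.append_right, map_smul]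
      rfl
    -- apply relative projectivity
    let B := ModuleCat.of Λ (Fin (k + m) → Λ × M)
    let pB : B ⟶ P := ModuleCat.ofHom p0
    let A := ModuleCat.of Λ (LinearMap.ker p0)
    let iA : A ⟶ B := ModuleCat.ofHom (LinearMap.ker p0).subtype
    have hFM : FM M A B P iA pB := by
      refine ⟨⟨Submodule.injective_subtype (LinearMap.ker p0), hsurj, fun y => ⟨fun hy => ⟨⟨y, LinearMap.mem_ker.mpr hy⟩, rfl⟩, ?_⟩⟩, ?_⟩
      · rintro ⟨⟨z, hz⟩, rfl⟩; exact hz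
      · intro f
        obtain ⟨g, hg⟩ := hlifts f.hom
        exact ⟨ModuleCat.ofHom g, by ext x; exact LinearMap.congr_fun hg x⟩
    obtain ⟨s, hs⟩ := hproj iA pB hFM (𝟙 P)
    exact ⟨k + m, s, pB, hs⟩
  · rintro ⟨n, s, r, hsr⟩ A B C i p hFM f
    obtain ⟨hses, hlift⟩ := hFM
    let q : (Fin n → Λ × M) →ₗ[Λ] C := (r ≫ f).hom
    choose bfun hbfun using fun i0 : Fin n =>
      hses.surj (q (Pi.single i0 (((1 : Λ), (0 : M)) : Λ × M)))
    have hMlift : ∀ i0 : Fin n, ∃ g : M →ₗ[Λ] B,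
        p.hom.comp g = q.comp ((LinearMap.single Λ (fun _ => Λ × M) i0).comp
          (LinearMap.inr Λ Λ M)) := by
      intro i0
      obtain ⟨g, hg⟩ := hlift (ModuleCat.ofHom (q.comp ((LinearMap.single Λ (fun _ => Λ × M) i0).comp
          (LinearMap.inr Λ Λ M))))
      exact ⟨g.hom, congrArg ModuleCat.Hom.hom hg⟩
    choose hfun hhfun using hMlift
    let g0 : (Fin n → Λ × M) →ₗ[Λ] B := StmtAux.combo bfun hfun
    refine ⟨s ≫ ModuleCat.ofHom g0, ?_⟩
    have key : ∀ v, p (g0 v) = q v := by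
      intro v
      have h1 : g0 v = ∑ i0, ((v i0).1 • bfun i0 + hfun i0 (v i0).2) := rfl
      rw [h1, map_sum, StmtAux.apply_eq q v]
      refine Finset.sum_congr rfl fun i0 _ => ?_
      rw [map_add, map_smul, hbfun i0]
      congr 1
      exact LinearMap.congr_fun (hhfun i0) (v i0).2
    have hgp : (ModuleCat.ofHom g0 ≫ p : ModuleCat.of Λ (Fin n → Λ × M) ⟶ C) = r ≫ f :=
      ModuleCat.hom_ext (LinearMap.ext fun v => key v)
    rw [Category.assoc, hgp, ← Category.assoc, hsr, Category.id_comp]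
end

section
/- For any Λ-module M, the relative theory F_M has enough projectives: for every Λ-module C there is an F_M-exact sequence 0 → K → P → C → 0 with P an F_M-projective module (in fact P may be taken in add(Λ ⊕ M)). -/
open CategoryTheory

universe u
variable {Λ : Type} [Ring Λ]

namespace Stmt4Aux
universe v


theorem isNoetherian_of_quotient_action {R S M : Type} [CommRing R] [Ring S]
    (π : R →+* S) (hπ : Function.Surjective π) [AddCommGroup M] [Module R M] [Module S M]
    (hcomp : ∀ (r : R) (x : M), π r • x = r • x) (h : IsNoetherian S M) :
    IsNoetherian R M := by
  rw [isNoetherian_def]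
  intro s
  let s' : Submodule S M :=
    { carrier := s
      add_mem' := fun ha hb => s.add_mem ha hb
      zero_mem' := s.zero_mem
      smul_mem' := by
        intro c x hx
        obtain ⟨r, rfl⟩ := hπ c
        rw [hcomp]
        exact s.smul_mem r hx }
  obtain ⟨T, hT⟩ := h.noetherian s'
  refine ⟨T, le_antisymm (Submodule.span_le.mpr ?_) ?_⟩
  · intro x hx
    have : x ∈ Submodule.span S (T : Set M) := Submodule.subset_span hx
    rw [hT] at this
    exact this
  · intro x hx
    have hx' : x ∈ s' := hx
    rw [← hT] at hx'
    let p : Submodule S M :=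
      { carrier := Submodule.span R (T : Set M)
        add_mem' := fun ha hb => Submodule.add_mem _ ha hb
        zero_mem' := Submodule.zero_mem _
        smul_mem' := by
          intro c y hy
          obtain ⟨r, rfl⟩ := hπ c
          rw [hcomp]
          exact Submodule.smul_mem _ r hy }
    have : Submodule.span S (T : Set M) ≤ p :=
      Submodule.span_le.mpr (fun y hy => Submodule.subset_span hy)
    exact this hx'

/-- Hopkins–Levitzki style step. -/
theorem noeth_of_pow_smul_eq_bot (R : Type) [CommRing R] (J : Ideal R)
    (hJss : IsSemisimpleRing (R ⧸ J)) :
    ∀ n : ℕ, ∀ (M : Type) (_ : AddCommGroup M) (_ : Module R M), IsArtinian R M →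
      J ^ n • (⊤ : Submodule R M) = ⊥ → IsNoetherian R M := by
  intro n
  induction n with
  | zero =>
    intro M _ _ _ h
    simp only [pow_zero, Ideal.one_eq_top, Submodule.top_smul] at h
    haveI : Subsingleton M := by
      constructor
      intro a b
      have ha : a ∈ (⊥ : Submodule R M) := h ▸ Submodule.mem_top
      have hb : b ∈ (⊥ : Submodule R M) := h ▸ Submodule.mem_top
      simp only [Submodule.mem_bot] at ha hb
      rw [ha, hb]
    infer_instance
  | succ n ih =>
    intro M _ _ hart h
    haveI : IsArtinian R M := hart
    set N : Submodule R M := J • ⊤ with hNdef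
    have hN : IsNoetherian R N := by
      refine ih N inferInstance inferInstance inferInstance ?_
      apply Submodule.map_injective_of_injective N.injective_subtype
      rw [Submodule.map_smul'', Submodule.map_bot, Submodule.map_top, Submodule.range_subtype,
        hNdef, ← Submodule.smul_assoc, Ideal.smul_eq_mul, ← pow_succ]
      exact h
    have hQ : IsNoetherian R (M ⧸ N) := by
      have hT : Module.IsTorsionBySet R (M ⧸ N) (J : Set R) := by
        intro x j
        obtain ⟨m, rfl⟩ := Submodule.Quotient.mk_surjective N x
        rw [← Submodule.Quotient.mk_smul, Submodule.Quotient.mk_eq_zero]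
        exact Submodule.smul_mem_smul j.2 Submodule.mem_top
      letI : Module (R ⧸ J) (M ⧸ N) := hT.module
      haveI : IsScalarTower R (R ⧸ J) (M ⧸ N) := hT.isScalarTower
      haveI hart' : IsArtinian (R ⧸ J) (M ⧸ N) := isArtinian_of_tower R inferInstance
      haveI : IsSemisimpleModule (R ⧸ J) (M ⧸ N) := inferInstance
      have hnoe : IsNoetherian (R ⧸ J) (M ⧸ N) :=
        ((IsSemisimpleModule.finite_tfae (R := R ⧸ J) (M := M ⧸ N)).out 2 1).mp hart'
      exact isNoetherian_of_quotient_action (Ideal.Quotient.mk J)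
        Ideal.Quotient.mk_surjective (fun r x => hT.mk_smul r x) hnoe
    exact (isNoetherian_iff_submodule_quotient N).mpr ⟨hN, hQ⟩

theorem isNoetherianRing_of_comm_artinian (R : Type) [CommRing R] [IsArtinianRing R] :
    IsNoetherianRing R := by
  set J : Ideal R := (⊥ : Ideal R).jacobson with hJdef
  obtain ⟨n, hn⟩ := IsArtinianRing.isNilpotent_jacobson_bot (R := R)
  have hrad : J.IsRadical := by
    have hle : J ≤ (⊥ : Ideal R).radical := by
      intro x hx
      refine ⟨n, ?_⟩
      have := J.pow_mem_pow hx n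
      rw [hn] at this
      simpa using this
    have heq : J = (⊥ : Ideal R).radical := le_antisymm hle Ideal.radical_le_jacobson
    rw [heq]
    exact Ideal.radical_isRadical ⊥
  haveI : IsReduced (R ⧸ J) := (Ideal.isRadical_iff_quotient_reduced J).mp hrad
  haveI : IsSemisimpleRing (R ⧸ J) := IsArtinianRing.isSemisimpleRing_of_isReduced (R := R ⧸ J)
  refine noeth_of_pow_smul_eq_bot R J ‹_› n R _ _ inferInstance ?_
  have htop : (⊤ : Submodule R R) = (1 : Ideal R) := Ideal.one_eq_top.symm
  rw [htop, Ideal.smul_eq_mul, mul_one, hn]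
  exact Submodule.zero_eq_bot


variable {R : Type} [CommRing R] {Λ : Type} [Ring Λ] [Algebra R Λ]

/-- Scalar multiplication by a central element, as a `Λ`-linear endomorphism. -/
def centralSMul (r : R) (M : Type v) [AddCommGroup M] [Module Λ M] : M →ₗ[Λ] M where
  toFun x := algebraMap R Λ r • x
  map_add' x y := smul_add _ x y
  map_smul' a x := by
    simp only [RingHom.id_apply]
    rw [← mul_smul, ← mul_smul, Algebra.commutes]

theorem homFG [IsArtinianRing R] [Module.Finite R Λ]
    (M C : Type v) [AddCommGroup M] [Module Λ M] [AddCommGroup C] [Module Λ C]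
    [Module.Finite Λ M] [Module.Finite Λ C] :
    ∃ (m : ℕ) (f : Fin m → (M →ₗ[Λ] C)), ∀ g : M →ₗ[Λ] C, ∃ c : Fin m → R,
      ∀ x : M, g x = ∑ j, algebraMap R Λ (c j) • f j x := by
  haveI : IsNoetherianRing R := isNoetherianRing_of_comm_artinian R
  letI : Module R M := Module.compHom M (algebraMap R Λ)
  letI : Module R C := Module.compHom C (algebraMap R Λ)
  haveI hTM : IsScalarTower R Λ M :=
    ⟨fun r a x => by
      show (r • a) • x = algebraMap R Λ r • (a • x)
      rw [Algebra.smul_def, mul_smul]⟩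
  haveI hTC : IsScalarTower R Λ C :=
    ⟨fun r a x => by
      show (r • a) • x = algebraMap R Λ r • (a • x)
      rw [Algebra.smul_def, mul_smul]⟩
  haveI hSC : SMulCommClass Λ R C :=
    ⟨fun a r x => by
      show a • algebraMap R Λ r • x = algebraMap R Λ r • (a • x)
      rw [← mul_smul, ← mul_smul, Algebra.commutes]⟩
  haveI : Module.Finite R M := Module.Finite.trans Λ M
  haveI : Module.Finite R C := Module.Finite.trans Λ C
  obtain ⟨k, x, hx⟩ := Module.Finite.exists_fin (R := R) (M := M)
  -- evaluation map into `Fin k → C`, R-linearly, injective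
  let ev : (M →ₗ[Λ] C) →ₗ[R] (Fin k → C) :=
    { toFun := fun g => fun i => g (x i)
      map_add' := fun g h => rfl
      map_smul' := fun r g => rfl }
  have hev : Function.Injective ev := by
    intro g h hgh
    ext y
    have hy : y ∈ Submodule.span R (Set.range x) := hx ▸ Submodule.mem_top
    induction hy using Submodule.span_induction with
    | mem z hz =>
      obtain ⟨i, rfl⟩ := hz
      exact congrFun hgh i
    | zero => simp
    | add a b _ _ ha hb => simp [map_add, ha, hb]
    | smul r a _ ha =>
      show g (algebraMap R Λ r • a) = h (algebraMap R Λ r • a)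
      rw [map_smul, map_smul, ha]
  haveI : IsNoetherian R (Fin k → C) := inferInstance
  haveI : IsNoetherian R (M →ₗ[Λ] C) := isNoetherian_of_injective ev hev
  haveI : Module.Finite R (M →ₗ[Λ] C) := Module.finite_def.mpr (IsNoetherian.noetherian ⊤)
  obtain ⟨m, f, hf⟩ := Module.Finite.exists_fin (R := R) (M := M →ₗ[Λ] C)
  refine ⟨m, f, fun g => ?_⟩
  have hg : g ∈ Submodule.span R (Set.range f) := hf ▸ Submodule.mem_top
  rw [Submodule.mem_span_range_iff_exists_fun] at hg
  obtain ⟨c, hc⟩ := hg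
  refine ⟨c, fun y => ?_⟩
  rw [← hc]
  rw [LinearMap.sum_apply]
  rfl

theorem addSummand (Λ : Type) [Ring Λ] (M : Type v) [AddCommGroup M] [Module Λ M] (n m : ℕ) :
    ∃ (s : ((Fin n → Λ) × (Fin m → M)) →ₗ[Λ] (Fin (n+m) → Λ × M))
      (r : (Fin (n+m) → Λ × M) →ₗ[Λ] ((Fin n → Λ) × (Fin m → M))),
      r.comp s = LinearMap.id := by
  refine ⟨LinearMap.pi fun k =>
      Fin.addCases (motive := fun _ => ((Fin n → Λ) × (Fin m → M)) →ₗ[Λ] (Λ × M))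
        (fun i => (LinearMap.inl Λ Λ M).comp
          ((LinearMap.proj i).comp (LinearMap.fst Λ (Fin n → Λ) (Fin m → M))))
        (fun j => (LinearMap.inr Λ Λ M).comp
          ((LinearMap.proj j).comp (LinearMap.snd Λ (Fin n → Λ) (Fin m → M)))) k,
      LinearMap.prod
        (LinearMap.pi fun i => (LinearMap.fst Λ Λ M).comp (LinearMap.proj (Fin.castAdd m i)))
        (LinearMap.pi fun j => (LinearMap.snd Λ Λ M).comp (LinearMap.proj (Fin.natAdd n j))),
      ?_⟩
  refine LinearMap.ext fun z => ?_
  refine Prod.ext ?_ ?_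
  · funext i
    simp [LinearMap.pi_apply, Fin.addCases_left]
  · funext j
    simp [LinearMap.pi_apply, Fin.addCases_right]

end Stmt4Aux


open RelHom in
/-- The relative theory `F_M` has enough projectives. -/
theorem stmt4 (R : Type) [CommRing R] [IsArtinianRing R] (Λ : Type) [Ring Λ] [Algebra R Λ]
    [Module.Finite R Λ]
    (M : ModuleCat Λ) (hM : Module.Finite Λ M)
    (C : ModuleCat Λ) (hC : Module.Finite Λ C) :
    ∃ (K P : ModuleCat Λ) (i : K ⟶ P) (p : P ⟶ C), Module.Finite Λ K ∧ Module.Finite Λ P ∧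
      FM M K P C i p ∧ IsRelProjective (FM M) P ∧ InAdd (ModuleCat.of Λ (Λ × M)) P := by
  classical
  haveI := hM; haveI := hC
  haveI : IsNoetherianRing R := Stmt4Aux.isNoetherianRing_of_comm_artinian R
  haveI : IsNoetherianRing Λ := isNoetherian_of_tower R inferInstance
  obtain ⟨n, f₀, hf₀⟩ := Module.Finite.exists_fin' Λ C
  obtain ⟨m, f, hf⟩ := Stmt4Aux.homFG (R := R) (Λ := Λ) M.carrier C.carrier
  set F : (Fin m → M) →ₗ[Λ] C := ∑ j, (f j).comp (LinearMap.proj j) with hF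
  have hFapp : ∀ b : Fin m → M, F b = ∑ j, f j (b j) := by
    intro b; rw [hF]; simp [LinearMap.sum_apply]
  set pl : ((Fin n → Λ) × (Fin m → M)) →ₗ[Λ] C := f₀.coprod F with hpl
  have hplapp : ∀ z, pl z = f₀ z.1 + F z.2 := fun z => rfl
  have hsurj : Function.Surjective pl := by
    intro c; obtain ⟨a, ha⟩ := hf₀ c
    refine ⟨(a, 0), ?_⟩
    rw [hplapp]; simp [ha]
  refine ⟨ModuleCat.of Λ (LinearMap.ker pl), ModuleCat.of Λ ((Fin n → Λ) × (Fin m → M)),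
    ModuleCat.ofHom (LinearMap.ker pl).subtype, ModuleCat.ofHom pl, ?_, ?_, ?_, ?_, ?_⟩
  · exact Module.Finite.iff_fg.mpr (IsNoetherian.noetherian (LinearMap.ker pl))
  · exact inferInstanceAs (Module.Finite Λ ((Fin n → Λ) × (Fin m → M)))
  · refine ⟨⟨Submodule.injective_subtype _, hsurj, ?_⟩, ?_⟩
    · intro z
      exact ⟨fun hz => ⟨⟨z, hz⟩, rfl⟩, by rintro ⟨w, rfl⟩; exact w.2⟩
    · intro g
      obtain ⟨c, hc⟩ := hf g.hom
      refine ⟨ModuleCat.ofHom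
        (LinearMap.prod 0 (LinearMap.pi fun j => Stmt4Aux.centralSMul (c j) M)), ?_⟩
      refine ModuleCat.hom_ext (LinearMap.ext fun x => ?_)
      show pl (0, fun j => algebraMap R Λ (c j) • x) = g.hom x
      rw [hplapp]
      simp only [map_zero, zero_add]
      rw [hFapp, hc x]
      refine Finset.sum_congr rfl fun j _ => ?_
      rw [map_smul]
  · intro A B C' i' p' hFp' φ
    obtain ⟨⟨hinj, hsurj', hex⟩, hlift⟩ := hFp'
    have hchoice : ∀ i : Fin n, ∃ b : B, p' b = φ ((Pi.single i 1 : Fin n → Λ), 0) :=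
      fun i => hsurj' _
    choose b hb using hchoice
    set g₁ : (Fin n → Λ) →ₗ[Λ] B :=
      ∑ i, (LinearMap.toSpanSingleton Λ B (b i)).comp (LinearMap.proj i) with hg₁
    have hg₂ : ∀ j : Fin m, ∃ g : M ⟶ B,
        g ≫ p' = ModuleCat.ofHom
          ((LinearMap.inr Λ (Fin n → Λ) (Fin m → M)).comp
            (LinearMap.single Λ (fun _ : Fin m => M) j)) ≫ φ :=
      fun j => hlift _
    choose g₂ hgg₂ using hg₂
    refine ⟨ModuleCat.ofHom (g₁.coprod
      (∑ j, ((g₂ j).hom).comp (LinearMap.proj j))), ModuleCat.hom_ext (LinearMap.ext fun z => ?_)⟩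
    have h1 : p' (g₁ z.1) = φ (z.1, 0) := by
      rw [hg₁]
      simp only [LinearMap.sum_apply, LinearMap.coe_comp, Function.comp_apply,
        LinearMap.proj_apply, LinearMap.toSpanSingleton_apply, map_sum, map_smul]
      simp only [hb]
      have hsum : (∑ i, z.1 i • ((Pi.single i 1 : Fin n → Λ), (0 : Fin m → M)))
          = (z.1, (0 : Fin m → M)) := by
        rw [Prod.ext_iff]
        constructor
        · rw [Prod.fst_sum]
          funext t
          rw [Finset.sum_apply]
          simp [Pi.single_apply]
        · rw [Prod.snd_sum]
          simp
      calc ∑ i, z.1 i • φ ((Pi.single i 1 : Fin n → Λ), (0 : Fin m → M))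
          = φ (∑ i, z.1 i • ((Pi.single i 1 : Fin n → Λ), (0 : Fin m → M))) := by
            rw [map_sum]; simp only [map_smul]
        _ = φ (z.1, 0) := by rw [hsum]
    have h2 : ∀ j, p' (g₂ j (z.2 j)) = φ (0, Pi.single j (z.2 j)) := by
      intro j
      have := congrArg (fun (h : M ⟶ C') => h (z.2 j)) (hgg₂ j)
      simpa using this
    show p' ((g₁.coprod (∑ j, ((g₂ j).hom).comp (LinearMap.proj j))) z) = φ z
    rw [LinearMap.coprod_apply, map_add, h1]
    simp only [LinearMap.sum_apply, LinearMap.coe_comp, Function.comp_apply,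
      LinearMap.proj_apply, map_sum]
    simp only [h2]
    rw [← map_sum]
    have hsum2 : (∑ j, ((0 : Fin n → Λ), Pi.single j (z.2 j)))
        = ((0 : Fin n → Λ), z.2) := by
      rw [Prod.ext_iff]
      constructor
      · rw [Prod.fst_sum]; simp
      · rw [Prod.snd_sum]
        exact Finset.univ_sum_single z.2
    rw [hsum2, ← map_add]
    have hzz : ((z.1, (0 : Fin m → M)) + ((0 : Fin n → Λ), z.2)) = z := by
      rw [Prod.ext_iff]
      exact ⟨add_zero z.1, zero_add z.2⟩
    rw [hzz]
  · obtain ⟨sl, rl, hrs⟩ := Stmt4Aux.addSummand Λ M.carrier n m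
    exact ⟨n + m, ModuleCat.ofHom sl, ModuleCat.ofHom rl, ModuleCat.hom_ext hrs⟩
end

section
/- Let M₂ be a generator and M₁ a cogenerator for mod Λ, and k a positive integer. If Ext^i_Λ(M₂, M₁) = 0 for 0 < i ≤ k, then for every Λ-module C and all 0 < i ≤ k the relative extension group Ext^i_{F_{M₂}}(C, M₁) is isomorphic to the absolute Ext^i_Λ(C, M₁). -/
open CategoryTheory

universe u
variable {Λ : Type} [Ring Λ]

namespace RelHom
variable {Λ : Type} [Ring Λ]

/-- An `F`-projective resolution of `C`, given by its modules, syzygies and splicing data. -/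
structure RelResolution (F : ExtPred Λ) (C : ModuleCat Λ) where
  P : ℕ → ModuleCat Λ
  K : ℕ → ModuleCat Λ
  ι : ∀ n, K (n + 1) ⟶ P n
  π : ∀ n, P n ⟶ K n
  ε : K 0 ≅ C
  proj : ∀ n, IsRelProjective F (P n)
  fex : ∀ n, F (K (n + 1)) (P n) (K n) (ι n) (π n)

/-- The differential of the resolution. -/
def RelResolution.d {F : ExtPred Λ} {C : ModuleCat Λ} (res : RelResolution F C) (n : ℕ) :
    res.P (n + 1) ⟶ res.P n :=
  res.π (n + 1) ≫ res.ι n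

/-- Precomposition on Hom-groups, as an additive map. -/
def homDiff (A : ModuleCat Λ) {X Y : ModuleCat Λ} (d : X ⟶ Y) : (Y ⟶ A) →+ (X ⟶ A) :=
  AddMonoidHom.mk' (fun g => d ≫ g) (fun a b => by simp)

/-- The `(i+1)`-st cohomology of the complex `Hom(P_•, A)`; for an `F`-projective resolution
of `C` this computes the relative extension group `Ext_F^(i+1)(C, A)`. -/
abbrev RelResolution.cohomologySucc {F : ExtPred Λ} {C : ModuleCat Λ} (res : RelResolution F C)
    (A : ModuleCat Λ) (i : ℕ) : Type _ :=
  (AddMonoidHom.ker (homDiff A (res.d (i + 1)))) ⧸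
    ((AddMonoidHom.range (homDiff A (res.d i))).addSubgroupOf
      (AddMonoidHom.ker (homDiff A (res.d (i + 1)))))

end RelHom

namespace RelHom
variable {Λ : Type} [Ring Λ]

section Infra

instance instCoeHomLin {X Y : ModuleCat Λ} : Coe (X ⟶ Y) (X →ₗ[Λ] Y) := ⟨fun f => f.hom⟩

instance instCoeLinHom {X Y : ModuleCat Λ} : Coe (X →ₗ[Λ] Y) (X ⟶ Y) :=
  ⟨fun f => ModuleCat.ofHom f⟩

lemma hom_ext {X Y : ModuleCat Λ} {f g : X ⟶ Y} (h : ∀ x, f x = g x) : f = g :=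
  ModuleCat.hom_ext (LinearMap.ext h)

lemma comp_app {X Y Z : ModuleCat Λ} (f : X ⟶ Y) (g : Y ⟶ Z) (x : X) :
    (f ≫ g) x = g (f x) := rfl

lemma exists_desc {X Y A : ModuleCat Λ} (p : X ⟶ Y) (hp : Function.Surjective p)
    (g : X ⟶ A) (hker : ∀ x, p x = 0 → g x = 0) : ∃ h : Y ⟶ A, p ≫ h = g := by
  have key : ∀ x x' : X, p x = p x' → g x = g x' := by
    intro x x' hxx
    have h0 : g (x - x') = 0 := hker _ (by rw [map_sub, hxx, sub_self])
    rw [map_sub, sub_eq_zero] at h0; exact h0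
  let h0 : Y → A := fun y => g (Function.surjInv hp y)
  have hint : ∀ x : X, h0 (p x) = g x := fun x => key _ _ (Function.surjInv_eq hp (p x))
  refine ⟨ModuleCat.ofHom ⟨⟨h0, ?_⟩, ?_⟩, ?_⟩
  · intro y y'
    obtain ⟨x, rfl⟩ := hp y; obtain ⟨x', rfl⟩ := hp y'
    rw [← map_add, hint, hint, hint, map_add]
  · intro c y
    obtain ⟨x, rfl⟩ := hp y
    show h0 (c • p x) = c • h0 (p x)
    rw [← map_smul, hint, hint, map_smul]
  · exact hom_ext (fun x => hint x)

lemma exists_corestrict {K P Q : ModuleCat Λ} (ι : K ⟶ P) (hι : Function.Injective ι)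
    (g : Q ⟶ P) (hrange : ∀ q, ∃ kq, ι kq = g q) : ∃ h : Q ⟶ K, h ≫ ι = g := by
  let h0 : Q → K := fun q => (hrange q).choose
  have hspec : ∀ q, ι (h0 q) = g q := fun q => (hrange q).choose_spec
  refine ⟨ModuleCat.ofHom ⟨⟨h0, ?_⟩, ?_⟩, ?_⟩
  · intro q q'; apply hι; rw [map_add, hspec, hspec, hspec, map_add]
  · intro c q; apply hι
    show ι (h0 (c • q)) = ι (c • h0 q)
    rw [map_smul, hspec, hspec, map_smul]
  · exact hom_ext fun q => hspec q

lemma epi_cancel {B C D : ModuleCat Λ} {p : B ⟶ C} (hp : Function.Surjective p) {a b : C ⟶ D}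
    (h : p ≫ a = p ≫ b) : a = b := by
  apply hom_ext; intro c
  obtain ⟨x, rfl⟩ := hp c
  exact congrArg (fun f => (f : B ⟶ D) x) h

lemma IsSES.mem_range_of {A B C : ModuleCat Λ} {i : A ⟶ B} {p : B ⟶ C} (h : IsSES i p)
    {b : B} (hb : p b = 0) : ∃ a, i a = b := (h.exact b).mp hb

lemma IsSES.comp_zero {A B C : ModuleCat Λ} {i : A ⟶ B} {p : B ⟶ C} (h : IsSES i p)
    (a : A) : p (i a) = 0 := (h.exact (i a)).mpr ⟨a, rfl⟩

lemma IsSES.comp_iso {A B C C' : ModuleCat Λ} {i : A ⟶ B} {p : B ⟶ C} (h : IsSES i p)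
    (e : C ≅ C') : IsSES i (p ≫ e.hom) := by
  have hinv : ∀ x : C, e.inv (e.hom x) = x :=
    fun x => congrArg (fun f : C ⟶ C => f x) e.hom_inv_id
  have hinv2 : ∀ x : C', e.hom (e.inv x) = x :=
    fun x => congrArg (fun f : C' ⟶ C' => f x) e.inv_hom_id
  have hinj : Function.Injective e.hom := by
    intro x y hxy; rw [← hinv x, ← hinv y, hxy]
  refine ⟨h.inj, ?_, ?_⟩
  · intro c'
    obtain ⟨b, hb⟩ := h.surj (e.inv c')
    exact ⟨b, by rw [comp_app, hb, hinv2]⟩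
  · intro b
    rw [show (p ≫ e.hom) b = e.hom (p b) from rfl]
    constructor
    · intro hb
      exact (h.exact b).mp (hinj (by rw [hb, map_zero]))
    · intro hb
      rw [(h.exact b).mpr hb, map_zero]

end Infra

section SecRetr

lemma retr_of_sec {A B C : ModuleCat Λ} {i : A ⟶ B} {p : B ⟶ C} (h : IsSES i p) (s : C ⟶ B)
    (hs : s ≫ p = 𝟙 C) : ∃ r : B ⟶ A, i ≫ r = 𝟙 A := by
  have hrange : ∀ b : B, ∃ a, i a = (𝟙 B - p ≫ s) b := by
    intro b
    apply h.mem_range_of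
    have hsp : p (s (p b)) = p b := congrArg (fun f : C ⟶ C => f (p b)) hs
    show p (b - s (p b)) = 0
    rw [map_sub, hsp, sub_self]
  obtain ⟨r, hr⟩ := exists_corestrict i h.inj _ hrange
  refine ⟨r, hom_ext fun a => h.inj ?_⟩
  have := congrArg (fun f : B ⟶ B => f (i a)) hr
  show i (r (i a)) = i a
  rw [show i (r (i a)) = (r ≫ i) (i a) from rfl, hr]
  show i a - s (p (i a)) = i a
  rw [h.comp_zero, map_zero, sub_zero]

lemma sec_of_retr {A B C : ModuleCat Λ} {i : A ⟶ B} {p : B ⟶ C} (h : IsSES i p) (r : B ⟶ A)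
    (hr : i ≫ r = 𝟙 A) : ∃ s : C ⟶ B, s ≫ p = 𝟙 C := by
  obtain ⟨s, hs⟩ := exists_desc p h.surj (𝟙 B - r ≫ i) (by
    intro x hx
    obtain ⟨a, rfl⟩ := h.mem_range_of hx
    show i a - i (r (i a)) = 0
    rw [show i (r (i a)) = i ((i ≫ r) a) from rfl, hr]
    show i a - i a = 0
    rw [sub_self])
  refine ⟨s, epi_cancel h.surj (hom_ext fun b => ?_)⟩
  have := congrArg (fun f : B ⟶ B => f b) hs
  show p (s (p b)) = p b
  have h2 : s (p b) = b - i (r b) := this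
  rw [h2, map_sub, h.comp_zero, sub_zero]

/-- from `relExtVanish Fall 0 X M₁` : every SES `M₁ → E → X` admits a section of `p`. -/
lemma sec_of_rv0 {M₁ X E : ModuleCat Λ} (hX : relExtVanish (Fall) 0 X M₁)
    {w : M₁ ⟶ E} {p : E ⟶ X} (h : IsSES w p) : ∃ s : X ⟶ E, s ≫ p = 𝟙 X := by
  obtain ⟨r, hr⟩ := hX E w p h
  exact sec_of_retr h r hr

end SecRetr

section EcoDef

variable (M₁ : ModuleCat Λ)

def Eco {K P : ModuleCat Λ} (ι : K ⟶ P) : Type _ :=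
  (K ⟶ M₁) ⧸ (homDiff M₁ ι).range

instance {K P : ModuleCat Λ} (ι : K ⟶ P) : AddCommGroup (Eco M₁ ι) :=
  inferInstanceAs (AddCommGroup ((K ⟶ M₁) ⧸ (homDiff M₁ ι).range))

variable {M₁}

def Eco.mk {K P : ModuleCat Λ} (ι : K ⟶ P) : (K ⟶ M₁) →+ Eco M₁ ι :=
  QuotientAddGroup.mk' _

lemma Eco.mk_surjective {K P : ModuleCat Λ} (ι : K ⟶ P) :
    Function.Surjective (Eco.mk (M₁ := M₁) ι) :=
  QuotientAddGroup.mk'_surjective _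

lemma Eco.mk_eq_zero {K P : ModuleCat Λ} (ι : K ⟶ P) (h : K ⟶ M₁) :
    Eco.mk ι h = 0 ↔ ∃ f : P ⟶ M₁, ι ≫ f = h := by
  have h1 : (Eco.mk (M₁ := M₁) ι h = 0) ↔ h ∈ (homDiff M₁ ι).range :=
    QuotientAddGroup.eq_zero_iff h
  rw [h1]
  constructor
  · rintro ⟨f, rfl⟩; exact ⟨f, rfl⟩
  · rintro ⟨f, hf⟩; exact ⟨f, hf⟩

end EcoDef

section CohomIso

lemma cohomIso {F : ExtPred Λ} {C : ModuleCat Λ} (res : RelResolution F C)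
    (hses : ∀ n, IsSES (res.ι n) (res.π n)) (M₁ : ModuleCat Λ) (i : ℕ) :
    Nonempty (res.cohomologySucc M₁ i ≃+ Eco M₁ (res.ι i)) := by
  classical
  set Φ0 : (res.K (i+1) ⟶ M₁) →+ (res.P (i+1) ⟶ M₁) := homDiff M₁ (res.π (i+1)) with hΦ0
  have hmem : ∀ h : res.K (i+1) ⟶ M₁, Φ0 h ∈ (homDiff M₁ (res.d (i+1))).ker := by
    intro h
    show res.d (i+1) ≫ (res.π (i+1) ≫ h) = 0
    apply hom_ext; intro z
    show h (res.π (i+1) (res.ι (i+1) (res.π (i+2) z))) = 0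
    rw [(hses (i+1)).comp_zero, map_zero]
  set Φ : (res.K (i+1) ⟶ M₁) →+ ↥((homDiff M₁ (res.d (i+1))).ker) :=
    Φ0.codRestrict _ hmem with hΦ
  have hbij : Function.Bijective Φ := by
    constructor
    · intro h h' hh
      apply hom_ext; intro κ
      obtain ⟨x, rfl⟩ := (hses (i+1)).surj κ
      have := congrArg (fun f : res.P (i+1) ⟶ M₁ => f x) (congrArg Subtype.val hh)
      exact this
    · rintro ⟨g, hg⟩
      have hg' : res.d (i+1) ≫ g = 0 := hg
      obtain ⟨h, hh⟩ := exists_desc (res.π (i+1)) (hses (i+1)).surj g (by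
        intro x hx
        obtain ⟨y, rfl⟩ := (hses (i+1)).mem_range_of hx
        obtain ⟨z, rfl⟩ := (hses (i+2)).surj y
        exact congrArg (fun f : res.P (i+2) ⟶ M₁ => f z) hg')
      exact ⟨h, Subtype.ext hh⟩
  set e := AddEquiv.ofBijective Φ hbij with he
  have hmap : AddSubgroup.map (e : (res.K (i+1) ⟶ M₁) ≃+ _)
      ((homDiff M₁ (res.ι i)).range)
      = ((homDiff M₁ (res.d i)).range).addSubgroupOf ((homDiff M₁ (res.d (i+1))).ker) := by
    apply AddSubgroup.ext
    rintro ⟨x, hx⟩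
    simp only [AddSubgroup.mem_map, AddMonoidHom.mem_range, AddSubgroup.mem_addSubgroupOf]
    constructor
    · rintro ⟨h, ⟨f, rfl⟩, hh⟩
      refine ⟨f, ?_⟩
      have : x = res.π (i+1) ≫ (res.ι i ≫ f) := (congrArg Subtype.val hh).symm
      rw [this]
      rfl
    · rintro ⟨f, hf⟩
      refine ⟨res.ι i ≫ f, ⟨f, rfl⟩, ?_⟩
      apply Subtype.ext
      show res.π (i+1) ≫ (res.ι i ≫ f) = x
      rw [← hf]
      rfl
  exact ⟨(QuotientAddGroup.congr _ _ e hmap).symm⟩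

end CohomIso

section Covers

/-- standard free cover -/
noncomputable abbrev coverP (X : ModuleCat Λ) : ModuleCat Λ := ModuleCat.of Λ (↑X →₀ Λ)

noncomputable def coverπ (X : ModuleCat Λ) : coverP X ⟶ X :=
  ModuleCat.ofHom (Finsupp.linearCombination Λ id)

lemma coverπ_surj (X : ModuleCat Λ) : Function.Surjective (coverπ X) := by
  intro x
  refine ⟨Finsupp.single x 1, ?_⟩
  show Finsupp.linearCombination Λ id (Finsupp.single x 1) = x
  rw [Finsupp.linearCombination_single, one_smul]; rfl

noncomputable abbrev coverK (X : ModuleCat Λ) : ModuleCat Λ :=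
  ModuleCat.of Λ (LinearMap.ker ((coverπ X).hom : coverP X →ₗ[Λ] X))

noncomputable def coverι (X : ModuleCat Λ) : coverK X ⟶ coverP X :=
  (LinearMap.ker ((coverπ X).hom : coverP X →ₗ[Λ] X)).subtype

lemma cover_ses (X : ModuleCat Λ) : IsSES (coverι X) (coverπ X) := by
  refine ⟨Subtype.val_injective, coverπ_surj X, ?_⟩
  intro y
  constructor
  · intro hy; exact ⟨⟨y, hy⟩, rfl⟩
  · rintro ⟨⟨z, hz⟩, rfl⟩; exact hz

lemma relproj_coverP (X : ModuleCat Λ) : IsRelProjective (Fall) (coverP X) := by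
  intro A B C i p hF f
  classical
  have hsurj : Function.Surjective p := hF.surj
  refine ⟨ModuleCat.ofHom (Finsupp.lsum ℕ (fun x => LinearMap.toSpanSingleton Λ _
    (Function.surjInv hsurj (f (Finsupp.single x 1))))), ?_⟩
  apply ModuleCat.hom_ext; apply Finsupp.lhom_ext
  intro a b
  show p ((Finsupp.lsum ℕ _) (Finsupp.single a b)) = f (Finsupp.single a b)
  rw [Finsupp.lsum_single]
  show p (b • Function.surjInv hsurj (f (Finsupp.single a 1))) = f (Finsupp.single a b)
  rw [map_smul, Function.surjInv_eq hsurj]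
  have : Finsupp.single a b = b • Finsupp.single a (1 : Λ) := by
    rw [Finsupp.smul_single, smul_eq_mul, mul_one]
  rw [this, map_smul]

lemma relproj_retract {X Y : ModuleCat Λ} (s : X ⟶ Y) (r : Y ⟶ X) (hsr : s ≫ r = 𝟙 X)
    (hY : IsRelProjective (Fall) Y) : IsRelProjective (Fall) X := by
  intro A B C i p hF f
  obtain ⟨g, hg⟩ := hY i p hF (r ≫ f)
  refine ⟨s ≫ g, ?_⟩
  rw [Category.assoc, hg, ← Category.assoc, hsr, Category.id_comp]

lemma relproj_prod {X Y : ModuleCat.{u} Λ} (hX : IsRelProjective (Fall) X)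
    (hY : IsRelProjective (Fall) Y) :
    IsRelProjective (Fall) (ModuleCat.of Λ (↑X × ↑Y)) := by
  intro A B C i p hF f
  obtain ⟨gX, hgX⟩ := hX i p hF
    ((show X ⟶ ModuleCat.of Λ (↑X × ↑Y) from LinearMap.inl Λ ↑X ↑Y) ≫ f)
  obtain ⟨gY, hgY⟩ := hY i p hF
    ((show Y ⟶ ModuleCat.of Λ (↑X × ↑Y) from LinearMap.inr Λ ↑X ↑Y) ≫ f)
  refine ⟨(show ModuleCat.of Λ (↑X × ↑Y) ⟶ X from LinearMap.fst Λ ↑X ↑Y) ≫ gX +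
    (show ModuleCat.of Λ (↑X × ↑Y) ⟶ Y from LinearMap.snd Λ ↑X ↑Y) ≫ gY, hom_ext ?_⟩
  rintro ⟨x, y⟩
  have h1 : p (gX x) = f (x, 0) := congrArg (fun φ : X ⟶ C => φ x) hgX
  have h2 : p (gY y) = f (0, y) := congrArg (fun φ : Y ⟶ C => φ y) hgY
  show p (gX x + gY y) = f (x, y)
  rw [map_add, h1, h2, ← map_add]
  congr 1
  show ((x, 0) : ↑X × ↑Y) + (0, y) = (x, y)
  rw [Prod.mk_add_mk, add_zero, zero_add]

lemma relproj_finsupp (I : Type u) {X : ModuleCat.{u} Λ} (hX : IsRelProjective (Fall) X) :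
    IsRelProjective (Fall) (ModuleCat.of Λ (I →₀ ↑X)) := by
  intro A B C i p hF f
  classical
  choose g hg using fun j : I => hX i p hF
    ((show X ⟶ ModuleCat.of Λ (I →₀ ↑X) from ModuleCat.ofHom (Finsupp.lsingle j)) ≫ f)
  refine ⟨ModuleCat.ofHom (Finsupp.lsum ℕ (fun j => (g j).hom)), ?_⟩
  apply ModuleCat.hom_ext; apply Finsupp.lhom_ext
  intro a b
  show p ((Finsupp.lsum ℕ (fun j => (g j).hom)) (Finsupp.single a b)) = f (Finsupp.single a b)
  rw [Finsupp.lsum_single]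
  exact congrArg (fun φ : X ⟶ C => φ b) (hg a)

lemma relproj_punit : IsRelProjective (Fall) (ModuleCat.of Λ PUnit.{u+1}) := by
  intro A B C i p hF f
  refine ⟨0, hom_ext ?_⟩
  intro x
  have hx : x = 0 := Subsingleton.elim x 0
  show p 0 = f x
  rw [hx, map_zero, map_zero]

end Covers

section PullbackSES

/-- Pull back a short exact sequence `M₁ → E → Z` along `f : Z' → Z`. -/
lemma pullback_ses {Y E Z Z' : ModuleCat.{u} Λ} {w : Y ⟶ E} {p : E ⟶ Z} (h : IsSES w p)
    (f : Z' ⟶ Z) :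
    ∃ (E' : ModuleCat.{u} Λ) (w' : Y ⟶ E') (p' : E' ⟶ Z') (φ : E' ⟶ E),
      IsSES w' p' ∧ w' ≫ φ = w ∧ (∀ x : E', p (φ x) = f (p' x)) ∧
      (∀ a b : E', φ a = φ b → p' a = p' b → a = b) ∧
      (∀ (T : ModuleCat.{u} Λ) (α : T ⟶ E) (β : T ⟶ Z'), α ≫ p = β ≫ f →
        ∃ χ : T ⟶ E', χ ≫ φ = α ∧ χ ≫ p' = β) := by
  let S : Submodule Λ (↑E × ↑Z') :=
    LinearMap.ker ((p.hom : E →ₗ[Λ] Z).comp (LinearMap.fst Λ ↑E ↑Z') -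
      (f.hom : Z' →ₗ[Λ] Z).comp (LinearMap.snd Λ ↑E ↑Z'))
  have hmemS : ∀ x : ↑E × ↑Z', x ∈ S ↔ p x.1 = f x.2 := by
    intro x
    show p x.1 - f x.2 = 0 ↔ _
    rw [sub_eq_zero]
  refine ⟨ModuleCat.of Λ ↥S,
    LinearMap.codRestrict S ((LinearMap.inl Λ ↑E ↑Z').comp (w.hom : Y →ₗ[Λ] E))
      (fun y => (hmemS _).mpr (by show p (w y) = f 0; rw [h.comp_zero, map_zero])),
    (LinearMap.snd Λ ↑E ↑Z').comp S.subtype, (LinearMap.fst Λ ↑E ↑Z').comp S.subtype,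
    ⟨?_, ?_, ?_⟩, rfl, ?_, ?_, ?_⟩
  · intro y y' hyy
    apply h.inj
    exact congrArg (fun q : ↑E × ↑Z' => q.1) (congrArg Subtype.val hyy)
  · intro z'
    obtain ⟨e, he⟩ := h.surj (f z')
    exact ⟨⟨(e, z'), (hmemS _).mpr he⟩, rfl⟩
  · rintro ⟨⟨e, z'⟩, hmem⟩
    constructor
    · intro hz
      have hz' : z' = 0 := hz
      have hpe : p e = 0 := by
        have := (hmemS _).mp hmem
        rw [this, hz', map_zero]
      obtain ⟨y, hy⟩ := h.mem_range_of hpe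
      refine ⟨y, Subtype.ext ?_⟩
      show ((w y, 0) : ↑E × ↑Z') = (e, z')
      rw [hy, hz']
    · rintro ⟨y, hy⟩
      rw [← hy]
      rfl
  · rintro ⟨⟨e, z'⟩, hmem⟩
    exact (hmemS _).mp hmem
  · rintro ⟨⟨e, z'⟩, hm⟩ ⟨⟨e2, z2⟩, hm2⟩ h1 h2
    apply Subtype.ext
    show ((e, z') : ↑E × ↑Z') = (e2, z2)
    have he : e = e2 := h1
    have hz : z' = z2 := h2
    rw [he, hz]
  · intro T α β hαβ
    refine ⟨LinearMap.codRestrict S ((α.hom : T →ₗ[Λ] E).prod (β.hom : T →ₗ[Λ] Z'))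
      (fun t => (hmemS _).mpr (congrArg (fun q : T ⟶ Z => q t) hαβ)), rfl, rfl⟩

end PullbackSES

section Ext0

/-- If `Ext¹(X, M₁) = 0` (in the `relExtVanish` sense), then any map `A → M₁` extends
along the injection of a SES `A → B → X`. -/
lemma ext0 {M₁ A B X : ModuleCat Λ} {u : A ⟶ B} {v : B ⟶ X} (hs : IsSES u v)
    (hX : relExtVanish (Fall) 0 X M₁) (h : A ⟶ M₁) : ∃ H : B ⟶ M₁, u ≫ H = h := by
  classical
  let D : Submodule Λ (↑M₁ × ↑B) :=
    LinearMap.range ((h.hom : A →ₗ[Λ] M₁).prod (-(u.hom : A →ₗ[Λ] B)))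
  let Q : ModuleCat Λ := ModuleCat.of Λ ((↑M₁ × ↑B) ⧸ D)
  let uQ : M₁ ⟶ Q := D.mkQ.comp (LinearMap.inl Λ ↑M₁ ↑B)
  let jQ : B ⟶ Q := D.mkQ.comp (LinearMap.inr Λ ↑M₁ ↑B)
  have hvD : ∀ x ∈ D, v x.2 = 0 := by
    rintro x ⟨a, rfl⟩
    show v (-(u a)) = 0
    rw [map_neg, hs.comp_zero, neg_zero]
  let qQ : Q ⟶ X := D.liftQ ((v.hom : B →ₗ[Λ] X).comp (LinearMap.snd Λ ↑M₁ ↑B))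
    (fun x hx => hvD x hx)
  have hqQ : ∀ m b, qQ (D.mkQ (m, b)) = v b := fun m b => rfl
  have hker : ∀ m b, qQ (D.mkQ (m, b)) = 0 → ∃ m', uQ m' = D.mkQ (m, b) := by
    intro m b hq
    obtain ⟨a, ha⟩ := hs.mem_range_of (hqQ m b ▸ hq)
    refine ⟨m + h a, ?_⟩
    show D.mkQ (m + h a, 0) = D.mkQ (m, b)
    rw [Submodule.mkQ_apply, Submodule.mkQ_apply, Submodule.Quotient.eq]
    refine ⟨a, ?_⟩
    show (h a, -(u a)) = (m + h a, 0) - (m, b)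
    rw [Prod.mk_sub_mk, ha]
    congr 1
    · rw [add_sub_cancel_left]
    · rw [zero_sub]
  have hses : IsSES uQ qQ := by
    refine ⟨?_, ?_, ?_⟩
    · intro m m' hmm
      have : D.mkQ ((m, 0) - (m', 0)) = 0 := by
        rw [map_sub, sub_eq_zero]; exact hmm
      rw [Submodule.mkQ_apply, Submodule.Quotient.mk_eq_zero] at this
      obtain ⟨a, ha⟩ := this
      have key : ((h a, -(u a)) : ↑M₁ × ↑B) = (m - m', 0) := by
        have h0 : ((m, (0:↑B)) : ↑M₁ × ↑B) - (m', 0) = (m - m', 0) := by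
          rw [Prod.mk_sub_mk, sub_zero]
        rw [← h0]; exact ha
      have ha1 : h a = m - m' := congrArg Prod.fst key
      have ha2 : -(u a) = 0 := congrArg Prod.snd key
      have ha3 : u a = 0 := by rw [← neg_neg (u a), ha2, neg_zero]
      have ha4 : a = 0 := hs.inj (by rw [ha3, map_zero])
      rw [← sub_eq_zero, ← ha1, ha4, map_zero]
    · intro x
      obtain ⟨b, hb⟩ := hs.surj x
      exact ⟨jQ b, hb⟩
    · intro q
      obtain ⟨mb, rfl⟩ := D.mkQ_surjective q
      obtain ⟨m, b⟩ := mb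
      constructor
      · intro hq
        obtain ⟨m', hm'⟩ := hker m b hq
        exact ⟨m', hm'⟩
      · rintro ⟨m', hm'⟩
        rw [← hm']
        show v 0 = 0
        exact map_zero _
  obtain ⟨r, hr⟩ := hX Q uQ qQ hses
  refine ⟨jQ ≫ r, hom_ext fun a => ?_⟩
  show r (jQ (u a)) = h a
  have hrel : jQ (u a) = uQ (h a) := by
    show D.mkQ (0, u a) = D.mkQ (h a, 0)
    rw [Submodule.mkQ_apply, Submodule.mkQ_apply, Submodule.Quotient.eq]
    refine ⟨-a, ?_⟩
    show (h (-a), -(u (-a))) = (0, u a) - (h a, 0)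
    rw [Prod.mk_sub_mk, map_neg, map_neg, neg_neg, zero_sub, sub_zero]
  rw [hrel]
  exact congrArg (fun φ : M₁ ⟶ M₁ => φ (h a)) hr

end Ext0

section RvPackage

lemma ker_ses {B C : ModuleCat.{u} Λ} (g : B ⟶ C) (hg : Function.Surjective g) :
    IsSES (show ModuleCat.of Λ ↥(LinearMap.ker (g.hom : B →ₗ[Λ] C)) ⟶ B from
      (LinearMap.ker (g.hom : B →ₗ[Λ] C)).subtype) g := by
  refine ⟨Subtype.val_injective, hg, ?_⟩
  intro y
  constructor
  · intro hy; exact ⟨⟨y, hy⟩, rfl⟩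
  · rintro ⟨⟨z, hz⟩, rfl⟩; exact hz

variable {M₁ : ModuleCat.{u} Λ}

lemma rv_coverK {Z : ModuleCat.{u} Λ} {j : ℕ} (h : relExtVanish (Fall) (j+1) Z M₁) :
    relExtVanish (Fall) j (coverK Z) M₁ :=
  h (coverK Z) (coverP Z) (coverι Z) (coverπ Z) (cover_ses Z) (relproj_coverP Z)

lemma rv_of_relproj : ∀ (j : ℕ) (X : ModuleCat.{u} Λ), IsRelProjective (Fall) X →
    relExtVanish (Fall) j X M₁ := by
  intro j
  induction j with
  | zero =>
    intro X hX B i p hF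
    obtain ⟨s, hs⟩ := hX i p hF (𝟙 X)
    exact retr_of_sec hF s hs
  | succ j ih =>
    intro X hX K P ι π hF hP
    have hses : IsSES ι π := hF
    obtain ⟨s, hs⟩ := hX ι π hF (𝟙 X)
    have hrange : ∀ x : ↑P, ∃ κ, ι κ = (𝟙 P - π ≫ s) x := by
      intro x
      apply hses.mem_range_of
      have hsp : π (s (π x)) = π x := congrArg (fun f : X ⟶ X => f (π x)) hs
      show π (x - s (π x)) = 0
      rw [map_sub, hsp, sub_self]
    obtain ⟨ρ, hρ⟩ := exists_corestrict ι hses.inj _ hrange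
    have hιρ : ι ≫ ρ = 𝟙 K := by
      apply hom_ext; intro κ
      apply hses.inj
      have := congrArg (fun f : P ⟶ P => f (ι κ)) hρ
      show ι (ρ (ι κ)) = ι κ
      rw [show ι (ρ (ι κ)) = (ρ ≫ ι) (ι κ) from rfl, hρ]
      show ι κ - s (π (ι κ)) = ι κ
      rw [hses.comp_zero, map_zero, sub_zero]
    exact ih K (relproj_retract ι ρ hιρ hP)

lemma rv_retract : ∀ (j : ℕ) {X Y : ModuleCat.{u} Λ} (s : X ⟶ Y) (r : Y ⟶ X),
    s ≫ r = 𝟙 X → relExtVanish (Fall) j Y M₁ → relExtVanish (Fall) j X M₁ := by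
  intro j
  induction j with
  | zero =>
    intro X Y s r hsr hY E w p hF
    have hses : IsSES w p := hF
    obtain ⟨E', w', p', φ, hses', hwφ, hcomm, hjoint, huniv⟩ := pullback_ses hses r
    obtain ⟨ρ', hρ'⟩ := hY E' w' p' hses'
    obtain ⟨χ, hχφ, hχp⟩ := huniv E (𝟙 E) (p ≫ s) (by
      apply hom_ext; intro e
      show p e = r (s (p e))
      exact (congrArg (fun f : X ⟶ X => f (p e)) hsr).symm)
    have hwχ : w ≫ χ = w' := by
      apply hom_ext; intro m
      apply hjoint
      · have h1 : φ (χ (w m)) = w m := congrArg (fun f : E ⟶ E => f (w m)) hχφ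
        have h2 : φ (w' m) = w m := congrArg (fun f : M₁ ⟶ E => f m) hwφ
        show φ (χ (w m)) = φ (w' m)
        rw [h1, h2]
      · have h1 : p' (χ (w m)) = s (p (w m)) := congrArg (fun f : E ⟶ Y => f (w m)) hχp
        show p' (χ (w m)) = p' (w' m)
        rw [h1, hses.comp_zero, map_zero, hses'.comp_zero]
    exact ⟨χ ≫ ρ', by rw [← Category.assoc, hwχ, hρ']⟩
  | succ j ih =>
    intro X Y s r hsr hY K Q ι π hF hQ
    have hses : IsSES ι π := hF
    classical
    let B : ModuleCat Λ := ModuleCat.of Λ (↑Q × ↑(coverP Y))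
    let g : B ⟶ Y := ((s.hom : X →ₗ[Λ] Y).comp ((π.hom : Q →ₗ[Λ] X).comp (LinearMap.fst Λ ↑Q ↑(coverP Y))))
      + (((coverπ Y).hom : coverP Y →ₗ[Λ] Y).comp (LinearMap.snd Λ ↑Q ↑(coverP Y)))
    have hgsurj : Function.Surjective g := by
      intro y
      obtain ⟨l, hl⟩ := coverπ_surj Y y
      refine ⟨(0, l), ?_⟩
      show s (π 0) + coverπ Y l = y
      rw [map_zero, map_zero, zero_add, hl]
    have hKY := ker_ses g hgsurj
    have hrvKY := hY (ModuleCat.of Λ ↥(LinearMap.ker (g.hom : B →ₗ[Λ] Y))) B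
      ((LinearMap.ker (g.hom : B →ₗ[Λ] Y)).subtype) g hKY
      (relproj_prod hQ (relproj_coverP Y))
    obtain ⟨θ, hθ⟩ := relproj_coverP Y ι π hF (coverπ Y ≫ r)
    -- retraction data for K as a retract of ker g
    let ψ : ModuleCat.of Λ ↥(LinearMap.ker (g.hom : B →ₗ[Λ] Y)) ⟶ Q :=
      ((LinearMap.fst Λ ↑Q ↑(coverP Y)) + ((θ.hom : coverP Y →ₗ[Λ] Q).comp
        (LinearMap.snd Λ ↑Q ↑(coverP Y)))).comp (LinearMap.ker (g.hom : B →ₗ[Λ] Y)).subtype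
    have hψrange : ∀ x, ∃ κ, ι κ = ψ x := by
      rintro ⟨⟨q, l⟩, hql⟩
      apply hses.mem_range_of
      have hql' : s (π q) + coverπ Y l = 0 := hql
      have hθl : π (θ l) = r (coverπ Y l) := congrArg (fun f : coverP Y ⟶ X => f l) hθ
      show π (q + θ l) = 0
      rw [map_add, hθl]
      have : r (s (π q)) = π q := congrArg (fun f : X ⟶ X => f (π q)) hsr
      have h2 : coverπ Y l = -(s (π q)) := by rw [eq_neg_iff_add_eq_zero, add_comm]; exact hql'
      rw [h2, map_neg, this, add_neg_cancel]
    obtain ⟨rK, hrK⟩ := exists_corestrict ι hses.inj ψ hψrange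
    let sK : K ⟶ ModuleCat.of Λ ↥(LinearMap.ker (g.hom : B →ₗ[Λ] Y)) :=
      ModuleCat.ofHom <| LinearMap.codRestrict _ ((LinearMap.inl Λ ↑Q ↑(coverP Y)).comp (ι.hom : K →ₗ[Λ] Q)) (by
        intro κ
        show s (π (ι κ)) + coverπ Y 0 = 0
        rw [hses.comp_zero, map_zero, map_zero, add_zero])
    have hsrK : sK ≫ rK = 𝟙 K := by
      apply hom_ext; intro κ
      apply hses.inj
      have := congrArg (fun f => (f : _ ⟶ Q) (sK κ)) hrK
      show ι (rK (sK κ)) = ι κ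
      rw [show ι (rK (sK κ)) = (rK ≫ ι) (sK κ) from rfl, hrK]
      show ι κ + θ 0 = ι κ
      rw [map_zero, add_zero]
    exact ih sK rK hsrK hrvKY

lemma schanuel_retract {K Q Z K' Q' : ModuleCat.{u} Λ} {a : K ⟶ Q} {b : Q ⟶ Z}
    {a' : K' ⟶ Q'} {b' : Q' ⟶ Z} (h : IsSES a b) (h' : IsSES a' b')
    (hQ : IsRelProjective (Fall) Q) (hQ' : IsRelProjective (Fall) Q') :
    ∃ (sk : K ⟶ ModuleCat.of Λ (↑K' × ↑Q)) (rk : ModuleCat.of Λ (↑K' × ↑Q) ⟶ K),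
      sk ≫ rk = 𝟙 K := by
  obtain ⟨θ, hθ⟩ := hQ a' b' h' b
  obtain ⟨θ', hθ'⟩ := hQ' a b h b'
  have hθap : ∀ q, b' (θ q) = b q := fun q => congrArg (fun f : Q ⟶ Z => f q) hθ
  have hθ'ap : ∀ q', b (θ' q') = b' q' := fun q' => congrArg (fun f : Q' ⟶ Z => f q') hθ'
  -- ξ : K ⟶ K' with ξ ≫ a' = -(a ≫ θ)
  obtain ⟨ξ, hξ⟩ := exists_corestrict a' h'.inj (-(a ≫ θ)) (by
    intro κ
    apply h'.mem_range_of
    show b' (-(θ (a κ))) = 0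
    rw [map_neg, hθap, h.comp_zero, neg_zero])
  have hξap : ∀ κ, a' (ξ κ) = -(θ (a κ)) := fun κ => congrArg (fun f : K ⟶ Q' => f κ) hξ
  -- m : K' × Q ⟶ Q , (κ', q) ↦ q - θ'(a' κ' + θ q), has range in range a
  let m : ModuleCat.of Λ (↑K' × ↑Q) ⟶ Q :=
    (LinearMap.snd Λ ↑K' ↑Q) - ((θ'.hom : Q' →ₗ[Λ] Q).comp
      (((a'.hom : K' →ₗ[Λ] Q').comp (LinearMap.fst Λ ↑K' ↑Q)) +
       ((θ.hom : Q →ₗ[Λ] Q').comp (LinearMap.snd Λ ↑K' ↑Q))))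
  obtain ⟨rk, hrk⟩ := exists_corestrict a h.inj m (by
    rintro ⟨κ', q⟩
    apply h.mem_range_of
    show b (q - θ' (a' κ' + θ q)) = 0
    rw [map_sub, hθ'ap, map_add, h'.comp_zero, hθap, zero_add, sub_self])
  refine ⟨(ξ.hom : K →ₗ[Λ] K').prod (a.hom : K →ₗ[Λ] Q), rk, hom_ext fun κ => ?_⟩
  apply h.inj
  have := congrArg (fun f => (f : _ ⟶ Q) ((ξ κ, a κ) : ↑K' × ↑Q)) hrk
  show a (rk ((ξ κ, a κ) : ↑K' × ↑Q)) = a κ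
  rw [show a (rk _) = (rk ≫ a) ((ξ κ, a κ) : ↑K' × ↑Q) from rfl, hrk]
  show a κ - θ' (a' (ξ κ) + θ (a κ)) = a κ
  rw [hξap, neg_add_cancel, map_zero, sub_zero]

end RvPackage

section RvPackage2

variable {M₁ : ModuleCat.{u} Λ}

lemma prod_ses {A B C A' B' C' : ModuleCat.{u} Λ} {i : A ⟶ B} {p : B ⟶ C}
    {i' : A' ⟶ B'} {p' : B' ⟶ C'} (h : IsSES i p) (h' : IsSES i' p') :
    IsSES (show ModuleCat.of Λ (↑A × ↑A') ⟶ ModuleCat.of Λ (↑B × ↑B') from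
        LinearMap.prodMap (i.hom : A →ₗ[Λ] B) (i'.hom : A' →ₗ[Λ] B'))
      (show ModuleCat.of Λ (↑B × ↑B') ⟶ ModuleCat.of Λ (↑C × ↑C') from
        LinearMap.prodMap (p.hom : B →ₗ[Λ] C) (p'.hom : B' →ₗ[Λ] C')) := by
  refine ⟨?_, ?_, ?_⟩
  · rintro ⟨a, a'⟩ ⟨c, c'⟩ hac
    have h1 : i a = i c := congrArg Prod.fst hac
    have h2 : i' a' = i' c' := congrArg Prod.snd hac
    rw [show ((a, a') : ↑A × ↑A') = (c, c') from by rw [h.inj h1, h'.inj h2]]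
  · rintro ⟨c, c'⟩
    obtain ⟨b, hb⟩ := h.surj c
    obtain ⟨b', hb'⟩ := h'.surj c'
    exact ⟨(b, b'), by show (p b, p' b') = (c, c'); rw [hb, hb']⟩
  · rintro ⟨b, b'⟩
    constructor
    · intro hb
      have h1 : p b = 0 := congrArg Prod.fst hb
      have h2 : p' b' = 0 := congrArg Prod.snd hb
      obtain ⟨a, ha⟩ := h.mem_range_of h1
      obtain ⟨a', ha'⟩ := h'.mem_range_of h2
      exact ⟨(a, a'), by show (i a, i' a') = (b, b'); rw [ha, ha']⟩
    · rintro ⟨⟨a, a'⟩, ha⟩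
      have h1 : i a = b := congrArg Prod.fst ha
      have h2 : i' a' = b' := congrArg Prod.snd ha
      show (p b, p' b') = 0
      rw [← h1, ← h2, h.comp_zero, h'.comp_zero]
      rfl

lemma finsupp_ses (I : Type u) {A B C : ModuleCat.{u} Λ} {i : A ⟶ B} {p : B ⟶ C}
    (h : IsSES i p) :
    IsSES (show ModuleCat.of Λ (I →₀ ↑A) ⟶ ModuleCat.of Λ (I →₀ ↑B) from
        ModuleCat.ofHom (Finsupp.mapRange.linearMap (i.hom : A →ₗ[Λ] B)))
      (show ModuleCat.of Λ (I →₀ ↑B) ⟶ ModuleCat.of Λ (I →₀ ↑C) from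
        ModuleCat.ofHom (Finsupp.mapRange.linearMap (p.hom : B →ₗ[Λ] C))) := by
  classical
  refine ⟨?_, ?_, ?_⟩
  · intro x y hxy
    apply Finsupp.ext; intro a
    apply h.inj
    have := congrArg (fun l : I →₀ ↑B => l a) hxy
    simpa only [ModuleCat.hom_ofHom, Finsupp.mapRange.linearMap_apply, Finsupp.mapRange_apply,
      Finsupp.coe_zero, Pi.zero_apply] using this
  · intro l0
    obtain ⟨l, rfl⟩ : ∃ l : I →₀ ↑C, l = l0 := ⟨l0, rfl⟩
    let g : ↑C → ↑B := fun c => if c = 0 then 0 else Function.surjInv h.surj c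
    have hg0 : g 0 = 0 := if_pos rfl
    refine ⟨Finsupp.mapRange g hg0 l, ?_⟩
    apply Finsupp.ext; intro a
    show (Finsupp.mapRange.linearMap (p.hom : B →ₗ[Λ] C)) (Finsupp.mapRange g hg0 l) a = l a
    rw [Finsupp.mapRange.linearMap_apply, Finsupp.mapRange_apply, Finsupp.mapRange_apply]
    by_cases hc : l a = 0
    · rw [hc]; show p (g 0) = 0; rw [hg0, map_zero]
    · show p (g (l a)) = l a
      rw [show g (l a) = Function.surjInv h.surj (l a) from if_neg hc,
        Function.surjInv_eq h.surj]
  · intro y0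
    obtain ⟨y, rfl⟩ : ∃ y : I →₀ ↑B, y = y0 := ⟨y0, rfl⟩
    constructor
    · intro hy
      have hya : ∀ a, p (y a) = 0 := by
        intro a
        have := congrArg (fun l : I →₀ ↑C => l a) hy
        simpa only [ModuleCat.hom_ofHom, Finsupp.mapRange.linearMap_apply, Finsupp.mapRange_apply,
      Finsupp.coe_zero, Pi.zero_apply] using this
      let f0 : ↑B → ↑A := fun b => if hb : p b = 0 then Classical.choose (h.mem_range_of hb)
        else 0
      have hf0 : f0 0 = 0 := by
        have hp0 : p (0 : ↑B) = 0 := map_zero _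
        have : f0 0 = Classical.choose (h.mem_range_of hp0) := dif_pos hp0
        rw [this]
        apply h.inj
        rw [Classical.choose_spec (h.mem_range_of hp0), map_zero]
      refine ⟨Finsupp.mapRange f0 hf0 y, ?_⟩
      apply Finsupp.ext; intro a
      simp only [Finsupp.mapRange.linearMap_apply, Finsupp.mapRange_apply]
      show i (f0 (y a)) = y a
      rw [show f0 (y a) = Classical.choose (h.mem_range_of (hya a)) from dif_pos (hya a)]
      exact Classical.choose_spec (h.mem_range_of (hya a))
    · rintro ⟨x0, hx⟩
      obtain ⟨x, rfl⟩ : ∃ x : I →₀ ↑A, x = x0 := ⟨x0, rfl⟩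
      rw [← hx]
      apply Finsupp.ext; intro a
      simp only [Finsupp.mapRange.linearMap_apply, Finsupp.mapRange_apply]
      exact h.comp_zero (x a)

lemma rv_prod : ∀ (j : ℕ) (X Y : ModuleCat.{u} Λ),
    (∀ j' ≤ j, relExtVanish (Fall) j' X M₁) → (∀ j' ≤ j, relExtVanish (Fall) j' Y M₁) →
    relExtVanish (Fall) j (ModuleCat.of Λ (↑X × ↑Y)) M₁ := by
  intro j
  induction j using Nat.strong_induction_on with
  | _ j ih =>
    rcases j with _ | j
    · intro X Y hX hY E w p hF
      have hses : IsSES w p := hF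
      obtain ⟨EX, wX, pX, φX, hsesX, hwφX, hcommX, _, _⟩ := pullback_ses hses
        (show X ⟶ ModuleCat.of Λ (↑X × ↑Y) from LinearMap.inl Λ ↑X ↑Y)
      obtain ⟨EY, wY, pY, φY, hsesY, hwφY, hcommY, _, _⟩ := pullback_ses hses
        (show Y ⟶ ModuleCat.of Λ (↑X × ↑Y) from LinearMap.inr Λ ↑X ↑Y)
      obtain ⟨sX, hsX⟩ := sec_of_rv0 (hX 0 le_rfl) hsesX
      obtain ⟨sY, hsY⟩ := sec_of_rv0 (hY 0 le_rfl) hsesY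
      set σ : ModuleCat.of Λ (↑X × ↑Y) ⟶ E :=
        ((φX.hom : EX →ₗ[Λ] E).comp ((sX.hom : X →ₗ[Λ] EX).comp (LinearMap.fst Λ ↑X ↑Y))) +
        ((φY.hom : EY →ₗ[Λ] E).comp ((sY.hom : Y →ₗ[Λ] EY).comp (LinearMap.snd Λ ↑X ↑Y))) with hσ
      have hsec : σ ≫ p = 𝟙 (ModuleCat.of Λ (↑X × ↑Y)) := by
        apply hom_ext
        rintro ⟨x, y⟩
        show p (φX (sX x) + φY (sY y)) = (x, y)
        rw [map_add, hcommX, hcommY]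
        have h1 : pX (sX x) = x := congrArg (fun f : X ⟶ X => f x) hsX
        have h2 : pY (sY y) = y := congrArg (fun f : Y ⟶ Y => f y) hsY
        rw [h1, h2]
        show ((x, 0) : ↑X × ↑Y) + (0, y) = (x, y)
        rw [Prod.mk_add_mk, add_zero, zero_add]
      exact retr_of_sec hses σ hsec
    · intro X Y hX hY K Q ι π hF hQ
      have hses : IsSES ι π := hF
      have hcses := prod_ses (cover_ses X) (cover_ses Y)
      have hK' : relExtVanish (Fall) j
          (ModuleCat.of Λ (↑(coverK X) × ↑(coverK Y))) M₁ := by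
        refine ih j (Nat.lt_succ_self j) _ _ ?_ ?_
        · exact fun j' hj' => rv_coverK (hX (j'+1) (Nat.succ_le_succ hj'))
        · exact fun j' hj' => rv_coverK (hY (j'+1) (Nat.succ_le_succ hj'))
      obtain ⟨sk, rk, hsrk⟩ := schanuel_retract hses hcses hQ
        (relproj_prod (relproj_coverP X) (relproj_coverP Y))
      have hprod : relExtVanish (Fall) j
          (ModuleCat.of Λ (↑(ModuleCat.of Λ (↑(coverK X) × ↑(coverK Y))) × ↑Q)) M₁ := by
        refine ih j (Nat.lt_succ_self j) _ _ ?_ ?_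
        · intro j' hj'
          refine ih j' (Nat.lt_succ_of_le hj') _ _ ?_ ?_
          · exact fun j'' hj'' => rv_coverK (hX (j''+1)
              (Nat.succ_le_succ (le_trans hj'' hj')))
          · exact fun j'' hj'' => rv_coverK (hY (j''+1)
              (Nat.succ_le_succ (le_trans hj'' hj')))
        · exact fun j' _ => rv_of_relproj j' Q hQ
      exact rv_retract j sk rk hsrk hprod

lemma rv_finsupp : ∀ (j : ℕ) (I : Type u) (X : ModuleCat.{u} Λ),
    (∀ j' ≤ j, relExtVanish (Fall) j' X M₁) →
    relExtVanish (Fall) j (ModuleCat.of Λ (I →₀ ↑X)) M₁ := by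
  intro j
  induction j using Nat.strong_induction_on with
  | _ j ih =>
    rcases j with _ | j
    · intro I X hX E w p hF
      have hses : IsSES w p := hF
      have hexist : ∀ a : I, ∃ σa : X ⟶ E, ∀ x : ↑X, p (σa x) = Finsupp.single a x := by
        intro a
        obtain ⟨Ea, wa, pa, φa, hsesa, hwφa, hcomma, _, _⟩ := pullback_ses hses
          (show X ⟶ ModuleCat.of Λ (I →₀ ↑X) from ModuleCat.ofHom (Finsupp.lsingle a))
        obtain ⟨sa, hsa⟩ := sec_of_rv0 (hX 0 le_rfl) hsesa
        refine ⟨sa ≫ φa, fun x => ?_⟩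
        show p (φa (sa x)) = _
        rw [hcomma]
        have h1 : pa (sa x) = x := congrArg (fun f : X ⟶ X => f x) hsa
        rw [h1]
        rfl
      choose σ hσ using hexist
      set σtot : ModuleCat.of Λ (I →₀ ↑X) ⟶ E :=
        ModuleCat.ofHom (Finsupp.lsum ℕ (fun a => ((σ a).hom : X →ₗ[Λ] E))) with hσtot
      have hsec : σtot ≫ p = 𝟙 (ModuleCat.of Λ (I →₀ ↑X)) := by
        apply ModuleCat.hom_ext; apply Finsupp.lhom_ext
        intro a b
        show p (σtot (Finsupp.single a b)) = Finsupp.single a b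
        rw [hσtot]
        show p ((Finsupp.lsum ℕ (fun a => ((σ a).hom : X →ₗ[Λ] E))) (Finsupp.single a b)) = _
        rw [Finsupp.lsum_single]
        exact hσ a b
      exact retr_of_sec hses σtot hsec
    · intro I X hX K Q ι π hF hQ
      have hses : IsSES ι π := hF
      have hcses := finsupp_ses I (cover_ses X)
      have hK' : relExtVanish (Fall) j (ModuleCat.of Λ (I →₀ ↑(coverK X))) M₁ :=
        ih j (Nat.lt_succ_self j) I _
          (fun j' hj' => rv_coverK (hX (j'+1) (Nat.succ_le_succ hj')))
      obtain ⟨sk, rk, hsrk⟩ := schanuel_retract hses hcses hQ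
        (relproj_finsupp I (relproj_coverP X))
      have hprod : relExtVanish (Fall) j
          (ModuleCat.of Λ (↑(ModuleCat.of Λ (I →₀ ↑(coverK X))) × ↑Q)) M₁ := by
        refine rv_prod j _ _ ?_ ?_
        · intro j' hj'
          exact ih j' (Nat.lt_succ_of_le hj') I _
            (fun j'' hj'' => rv_coverK (hX (j''+1) (Nat.succ_le_succ (le_trans hj'' hj'))))
        · exact fun j' _ => rv_of_relproj j' Q hQ
      exact rv_retract j sk rk hsrk hprod

lemma rv_FMproj {M₂ P : ModuleCat.{u} Λ} (hP : IsRelProjective (FM M₂) P) (k : ℕ)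
    (hvan : ∀ i < k, relExtVanish (Fall) i M₂ M₁) :
    ∀ j < k, relExtVanish (Fall) j P M₁ := by
  intro j hj
  classical
  let FP : ModuleCat Λ := ModuleCat.of Λ (↑P →₀ Λ)
  let MP : ModuleCat Λ := ModuleCat.of Λ ((M₂ ⟶ P) →₀ ↑M₂)
  let B : ModuleCat Λ := ModuleCat.of Λ (↑FP × ↑MP)
  let ev : MP ⟶ P := Finsupp.lsum ℕ (fun f : M₂ ⟶ P => (f.hom : M₂ →ₗ[Λ] P))
  let w : B ⟶ P := (((coverπ P).hom : coverP P →ₗ[Λ] P).comp (LinearMap.fst Λ ↑FP ↑MP)) +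
    ((ev.hom : MP →ₗ[Λ] P).comp (LinearMap.snd Λ ↑FP ↑MP))
  have hwsurj : Function.Surjective w := by
    intro x
    obtain ⟨l, hl⟩ := coverπ_surj P x
    refine ⟨(l, 0), ?_⟩
    show coverπ P l + ev 0 = x
    rw [map_zero, add_zero, hl]
  have hwses := ker_ses w hwsurj
  have hFM : FM M₂ (ModuleCat.of Λ ↥(LinearMap.ker (w.hom : B →ₗ[Λ] P))) B P
      ((LinearMap.ker (w.hom : B →ₗ[Λ] P)).subtype) w := by
    refine ⟨hwses, ?_⟩
    intro f
    refine ⟨(LinearMap.inr Λ ↑FP ↑MP).comp (Finsupp.lsingle f), hom_ext fun m => ?_⟩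
    show coverπ P 0 + ev (Finsupp.single f m) = f m
    rw [map_zero, zero_add]
    show (Finsupp.lsum ℕ (fun f : M₂ ⟶ P => (f.hom : M₂ →ₗ[Λ] P))) (Finsupp.single f m) = f m
    rw [Finsupp.lsum_single]
  obtain ⟨s, hs⟩ := hP (show ModuleCat.of Λ ↥(LinearMap.ker (w.hom : B →ₗ[Λ] P)) ⟶ B from
    (LinearMap.ker (w.hom : B →ₗ[Λ] P)).subtype) w hFM (𝟙 P)
  have hrvB : relExtVanish (Fall) j B M₁ := by
    refine rv_prod j FP MP ?_ ?_
    · exact fun j' _ => rv_of_relproj j' FP (relproj_coverP P)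
    · exact fun j' hj' => rv_finsupp j' (M₂ ⟶ P) M₂
        (fun j'' hj'' => hvan j'' (lt_of_le_of_lt (le_trans hj'' hj') hj))
  exact rv_retract j s w hs hrvB

end RvPackage2

section Horseshoe

structure SESD (Λ : Type) [Ring Λ] : Type (u+1) where
  K : ModuleCat.{u} Λ
  B : ModuleCat.{u} Λ
  X : ModuleCat.{u} Λ
  u : K ⟶ B
  v : B ⟶ X
  ses : IsSES u v

variable {M₁ : ModuleCat.{u} Λ}

noncomputable abbrev hP (s : SESD.{u} Λ) : ModuleCat.{u} Λ :=
  ModuleCat.of Λ (↑(coverP s.K) × ↑(coverP s.X))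

noncomputable def ht (s : SESD.{u} Λ) : coverP s.X ⟶ s.B :=
  Classical.choose (relproj_coverP s.X s.u s.v s.ses (coverπ s.X))

lemma ht_spec (s : SESD.{u} Λ) : ht s ≫ s.v = coverπ s.X :=
  Classical.choose_spec (relproj_coverP s.X s.u s.v s.ses (coverπ s.X))

lemma ht_app (s : SESD.{u} Λ) (l : ↑(coverP s.X)) : s.v (ht s l) = coverπ s.X l :=
  congrArg (fun f : coverP s.X ⟶ s.X => f l) (ht_spec s)

noncomputable def hπ (s : SESD.{u} Λ) : hP s ⟶ s.B :=
  ModuleCat.ofHom (((s.u.hom : s.K →ₗ[Λ] s.B).comp (((coverπ s.K).hom : coverP s.K →ₗ[Λ] s.K).comp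
    (LinearMap.fst Λ ↑(coverP s.K) ↑(coverP s.X)))) +
  (((ht s).hom : coverP s.X →ₗ[Λ] s.B).comp (LinearMap.snd Λ ↑(coverP s.K) ↑(coverP s.X))))

lemma hπ_app (s : SESD.{u} Λ) (lK : ↑(coverP s.K)) (lX : ↑(coverP s.X)) :
    hπ s ((lK, lX) : ↑(coverP s.K) × ↑(coverP s.X)) = s.u (coverπ s.K lK) + ht s lX := rfl

lemma hπ_surj (s : SESD.{u} Λ) : Function.Surjective (hπ s) := by
  intro b
  obtain ⟨lX, hlX⟩ := coverπ_surj s.X (s.v b)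
  have hv : s.v (b - ht s lX) = 0 := by
    rw [map_sub, ht_app, hlX, sub_self]
  obtain ⟨κ, hκ⟩ := s.ses.mem_range_of hv
  obtain ⟨lK, hlK⟩ := coverπ_surj s.K κ
  refine ⟨(lK, lX), ?_⟩
  rw [hπ_app, hlK, hκ, sub_add_cancel]

noncomputable abbrev hKB (s : SESD.{u} Λ) : ModuleCat.{u} Λ :=
  ModuleCat.of Λ ↥(LinearMap.ker ((hπ s).hom : hP s →ₗ[Λ] s.B))

noncomputable def hι (s : SESD.{u} Λ) : hKB s ⟶ hP s :=
  (LinearMap.ker ((hπ s).hom : hP s →ₗ[Λ] s.B)).subtype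

lemma hι_ses (s : SESD.{u} Λ) : IsSES (hι s) (hπ s) := ker_ses (hπ s) (hπ_surj s)

noncomputable def hu' (s : SESD.{u} Λ) : coverK s.K ⟶ hKB s :=
  ModuleCat.ofHom <| LinearMap.codRestrict _ ((LinearMap.inl Λ ↑(coverP s.K) ↑(coverP s.X)).comp
    ((coverι s.K).hom : coverK s.K →ₗ[Λ] coverP s.K)) (by
      intro κ
      show s.u (coverπ s.K (coverι s.K κ)) + ht s 0 = 0
      rw [(cover_ses s.K).comp_zero, map_zero, map_zero, add_zero])

lemma hu'_app (s : SESD.{u} Λ) (κ : ↑(coverK s.K)) :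
    hι s (hu' s κ) = ((coverι s.K κ, 0) : ↑(coverP s.K) × ↑(coverP s.X)) := rfl

noncomputable def hv' (s : SESD.{u} Λ) : hKB s ⟶ coverK s.X :=
  ModuleCat.ofHom <| LinearMap.codRestrict _ ((LinearMap.snd Λ ↑(coverP s.K) ↑(coverP s.X)).comp
    (LinearMap.ker ((hπ s).hom : hP s →ₗ[Λ] s.B)).subtype) (by
      rintro ⟨⟨lK, lX⟩, hx⟩
      have hx' : s.u (coverπ s.K lK) + ht s lX = 0 := hx
      show coverπ s.X lX = 0
      have hv0 : s.v (s.u (coverπ s.K lK) + ht s lX) = 0 := by rw [hx', map_zero]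
      rw [map_add, s.ses.comp_zero, zero_add, ht_app] at hv0
      exact hv0)

lemma hv'_app (s : SESD.{u} Λ) (x : ↑(hKB s)) :
    coverι s.X (hv' s x) = (LinearMap.snd Λ ↑(coverP s.K) ↑(coverP s.X)) (hι s x) := rfl

lemma hπ_hι (s : SESD.{u} Λ) (x : ↑(hKB s)) :
    s.u (coverπ s.K ((LinearMap.fst Λ ↑(coverP s.K) ↑(coverP s.X)) (hι s x))) +
      ht s ((LinearMap.snd Λ ↑(coverP s.K) ↑(coverP s.X)) (hι s x)) = 0 :=
  (hι_ses s).comp_zero x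

lemma hses' (s : SESD.{u} Λ) : IsSES (hu' s) (hv' s) := by
  refine ⟨?_, ?_, ?_⟩
  · intro κ κ' hκκ
    apply (cover_ses s.K).inj
    have h1 := congrArg (fun z : ↑(hKB s) => hι s z) hκκ
    have h2 : ((coverι s.K κ, 0) : ↑(coverP s.K) × ↑(coverP s.X)) = (coverι s.K κ', 0) := by
      rw [← hu'_app, ← hu'_app]; exact h1
    exact congrArg Prod.fst h2
  · intro κX
    have hvt : s.v (ht s (coverι s.X κX)) = 0 := by
      rw [ht_app]
      exact (cover_ses s.X).comp_zero κX
    obtain ⟨κ, hκ⟩ := s.ses.mem_range_of hvt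
    obtain ⟨lK, hlK⟩ := coverπ_surj s.K κ
    have hmem : ((-lK, coverι s.X κX) : ↑(coverP s.K) × ↑(coverP s.X)) ∈
        LinearMap.ker ((hπ s).hom : hP s →ₗ[Λ] s.B) := by
      apply LinearMap.mem_ker.mpr
      show s.u (coverπ s.K (-lK)) + ht s (coverι s.X κX) = 0
      rw [map_neg, map_neg, hlK, hκ, neg_add_cancel]
    refine ⟨(⟨((-lK, coverι s.X κX) : ↑(coverP s.K) × ↑(coverP s.X)), hmem⟩ :
      ↥(LinearMap.ker ((hπ s).hom : hP s →ₗ[Λ] s.B))), ?_⟩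
    apply (cover_ses s.X).inj
    rw [hv'_app]
    rfl
  · intro x
    constructor
    · intro h0
      have hsnd : (LinearMap.snd Λ ↑(coverP s.K) ↑(coverP s.X)) (hι s x) = 0 := by
        rw [← hv'_app, h0, map_zero]
      have hπx := hπ_hι s x
      rw [hsnd, map_zero, add_zero] at hπx
      have hπK : coverπ s.K ((LinearMap.fst Λ ↑(coverP s.K) ↑(coverP s.X)) (hι s x)) = 0 :=
        s.ses.inj (by rw [hπx, map_zero])
      refine ⟨(⟨(LinearMap.fst Λ ↑(coverP s.K) ↑(coverP s.X)) (hι s x), hπK⟩ :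
        ↥(LinearMap.ker ((coverπ s.K).hom : coverP s.K →ₗ[Λ] s.K))), ?_⟩
      apply (hι_ses s).inj
      rw [hu'_app]
      show (((LinearMap.fst Λ ↑(coverP s.K) ↑(coverP s.X)) (hι s x), 0) :
        ↑(coverP s.K) × ↑(coverP s.X)) = hι s x
      apply Prod.ext
      · rfl
      · rw [← hsnd]; rfl
    · rintro ⟨κ, hκ⟩
      apply (cover_ses s.X).inj
      rw [hv'_app, ← hκ, hu'_app, map_zero]
      rfl

noncomputable def hnext (s : SESD.{u} Λ) : SESD.{u} Λ :=
  ⟨coverK s.K, hKB s, coverK s.X, hu' s, hv' s, hses' s⟩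

noncomputable def hiter (s : SESD.{u} Λ) : ℕ → SESD.{u} Λ
  | 0 => s
  | n+1 => hnext (hiter s n)

noncomputable def hresB (s : SESD.{u} Λ) : RelResolution (Fall (Λ := Λ)) s.B where
  P n := hP (hiter s n)
  K n := (hiter s n).B
  ι n := hι (hiter s n)
  π n := hπ (hiter s n)
  ε := Iso.refl _
  proj n := relproj_prod (relproj_coverP _) (relproj_coverP _)
  fex n := hι_ses (hiter s n)

noncomputable def hresK (s : SESD.{u} Λ) : RelResolution (Fall (Λ := Λ)) s.K where
  P n := coverP (hiter s n).K
  K n := (hiter s n).K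
  ι n := coverι (hiter s n).K
  π n := coverπ (hiter s n).K
  ε := Iso.refl _
  proj n := relproj_coverP _
  fex n := cover_ses _

lemma rv_hiterX (s : SESD.{u} Λ) : ∀ (n j : ℕ), relExtVanish (Fall) (j + n) s.X M₁ →
    relExtVanish (Fall) j (hiter s n).X M₁ := by
  intro n
  induction n with
  | zero => exact fun j h => h
  | succ n ih =>
    intro j h
    have h' : relExtVanish (Fall) (j + 1 + n) s.X M₁ := by
      have harith : j + 1 + n = j + (n + 1) := by omega
      rw [harith]; exact h
    exact rv_coverK (ih (j+1) h')

lemma horseshoe_iso (s : SESD.{u} Λ) (i : ℕ)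
    (hX1 : relExtVanish (Fall) i s.X M₁) (hX2 : relExtVanish (Fall) (i+1) s.X M₁) :
    Nonempty (Eco M₁ ((hresB s).ι i) ≃+ Eco M₁ ((hresK s).ι i)) := by
  classical
  set t : SESD.{u} Λ := hiter s (i+1) with ht'
  -- the maps at level i
  have rvXi : relExtVanish (Fall) 0 (hiter s i).X M₁ :=
    rv_hiterX s i 0 (by rw [show 0 + i = i from by omega]; exact hX1)
  have rvXi1 : relExtVanish (Fall) 0 t.X M₁ :=
    rv_hiterX s (i+1) 0 (by rw [show 0 + (i+1) = i+1 from by omega]; exact hX2)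
  -- Θ0 : (t.B ⟶ M₁) →+ Eco(ιK)
  set ιB : (hresB s).K (i+1) ⟶ (hresB s).P i := (hresB s).ι i with hιB
  set ιK : (hresK s).K (i+1) ⟶ (hresK s).P i := (hresK s).ι i with hιK
  set Θ0 : ((hresB s).K (i+1) ⟶ M₁) →+ Eco M₁ ιK :=
    (Eco.mk ιK).comp (homDiff M₁ t.u) with hΘ0
  have hc2 : ∀ (x : ↑(t.B)), (coverι ((hiter s i).X)) (t.v x)
      = (LinearMap.snd Λ ↑(coverP (hiter s i).K) ↑(coverP (hiter s i).X)) (ιB x) :=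
    fun x => rfl
  have hsub : (homDiff M₁ ιB).range ≤ Θ0.ker := by
    rintro _ ⟨F, rfl⟩
    show Eco.mk ιK (t.u ≫ (ιB ≫ F)) = 0
    rw [Eco.mk_eq_zero]
    refine ⟨(show (hresK s).P i ⟶ (hresB s).P i from
      ModuleCat.ofHom (LinearMap.inl Λ ↑(coverP (hiter s i).K) ↑(coverP (hiter s i).X))) ≫ F,
      hom_ext fun κ => rfl⟩
  set Θ : Eco M₁ ιB →+ Eco M₁ ιK := QuotientAddGroup.lift _ Θ0 hsub with hΘ
  have hΘmk : ∀ h : (hresB s).K (i+1) ⟶ M₁, Θ (Eco.mk ιB h) = Eco.mk ιK (t.u ≫ h) :=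
    fun h => rfl
  have hsurj : Function.Surjective Θ := by
    intro y
    obtain ⟨hK, rfl⟩ := Eco.mk_surjective ιK y
    obtain ⟨H, hH⟩ := ext0 t.ses rvXi1 hK
    exact ⟨Eco.mk ιB H, (hΘmk H).trans (congrArg (Eco.mk ιK) hH)⟩
  have hinj : Function.Injective Θ := by
    rw [injective_iff_map_eq_zero]
    intro a ha
    obtain ⟨h, rfl⟩ := Eco.mk_surjective ιB a
    rw [hΘmk, Eco.mk_eq_zero] at ha
    obtain ⟨f, hf⟩ := ha
    rw [Eco.mk_eq_zero]
    -- h1 := h - ιB ≫ (fst ≫ f) kills range of t.u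
    set fstP : (hresB s).P i ⟶ (hresK s).P i :=
      ModuleCat.ofHom (LinearMap.fst Λ ↑(coverP (hiter s i).K) ↑(coverP (hiter s i).X)) with hfstP
    set h1 : (hresB s).K (i+1) ⟶ M₁ := h - ιB ≫ (fstP ≫ f) with hh1
    have hku : ∀ x : ↑(t.B), t.v x = 0 → h1 x = 0 := by
      intro x hx
      obtain ⟨κ, rfl⟩ := t.ses.mem_range_of hx
      show h (t.u κ) - f (fstP (ιB (t.u κ))) = 0
      have hfκ : f (fstP (ιB (t.u κ))) = f (ιK κ) := rfl
      rw [hfκ, show f (ιK κ) = (ιK ≫ f) κ from rfl, hf]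
      show h (t.u κ) - h (t.u κ) = 0
      rw [sub_self]
    obtain ⟨g, hg⟩ := exists_desc t.v t.ses.surj h1 hku
    obtain ⟨G, hG⟩ := ext0 (cover_ses ((hiter s i).X)) rvXi g
    set sndP : (hresB s).P i ⟶ coverP ((hiter s i).X) :=
      ModuleCat.ofHom (LinearMap.snd Λ ↑(coverP (hiter s i).K) ↑(coverP (hiter s i).X)) with hsndP
    refine ⟨fstP ≫ f + sndP ≫ G, hom_ext fun x => ?_⟩
    show f (fstP (ιB x)) + G (sndP (ιB x)) = h x
    have h1x : h1 x = g (t.v x) := (congrArg (fun φ : t.B ⟶ M₁ => φ x) hg).symm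
    have hgx : g (t.v x) = G (coverι ((hiter s i).X) (t.v x)) := by
      have := congrArg (fun φ : coverK ((hiter s i).X) ⟶ M₁ => φ (t.v x)) hG
      exact this.symm
    have hx1 : h1 x = h x - f (fstP (ιB x)) := rfl
    rw [hc2 x] at hgx
    have hkey : h x - f (fstP (ιB x)) = G (sndP (ιB x)) := by
      rw [← hx1, h1x]
      exact hgx
    rw [← hkey]
    abel
  exact ⟨AddEquiv.ofBijective Θ ⟨hinj, hsurj⟩⟩

end Horseshoe

section MainInduction

variable {M₁ : ModuleCat.{u} Λ}

structure ARes (M₁ : ModuleCat.{u} Λ) (kk : ℕ) (C : ModuleCat.{u} Λ) : Type (u+1) where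
  P : ℕ → ModuleCat.{u} Λ
  K : ℕ → ModuleCat.{u} Λ
  ι : ∀ n, K (n + 1) ⟶ P n
  π : ∀ n, P n ⟶ K n
  ε : K 0 ≅ C
  ses : ∀ n, IsSES (ι n) (π n)
  acy : ∀ n j, j < kk → relExtVanish (Fall) j (P n) M₁

noncomputable def ARes.ofRel (M₁ : ModuleCat.{u} Λ) (kk : ℕ) {C : ModuleCat.{u} Λ}
    (q : RelResolution (Fall (Λ := Λ)) C) : ARes M₁ kk C where
  P := q.P
  K := q.K
  ι := q.ι
  π := q.π
  ε := q.ε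
  ses n := q.fex n
  acy n j _ := rv_of_relproj j (q.P n) (q.proj n)

noncomputable def ARes.shift {kk : ℕ} {C : ModuleCat.{u} Λ} (r : ARes M₁ kk C) :
    ARes M₁ kk (r.K 1) where
  P n := r.P (n+1)
  K n := r.K (n+1)
  ι n := r.ι (n+1)
  π n := r.π (n+1)
  ε := Iso.refl _
  ses n := r.ses (n+1)
  acy n := r.acy (n+1)

noncomputable def RelResolution.shift {F : ExtPred Λ} {C : ModuleCat Λ}
    (q : RelResolution F C) : RelResolution F (q.K 1) where
  P n := q.P (n+1)
  K n := q.K (n+1)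
  ι n := q.ι (n+1)
  π n := q.π (n+1)
  ε := Iso.refl _
  proj n := q.proj (n+1)
  fex n := q.fex (n+1)

/-- the zero module -/
noncomputable def Zmod : ModuleCat.{u} Λ := ModuleCat.of Λ PUnit.{u+1}

lemma punit_ses (W : ModuleCat.{u} Λ) : IsSES (0 : Zmod (Λ := Λ) ⟶ W) (𝟙 W) := by
  refine ⟨?_, fun w => ⟨w, rfl⟩, ?_⟩
  · intro x y _
    exact @Subsingleton.elim PUnit.{u+1} _ x y
  · intro y
    constructor
    · intro hy
      exact ⟨0, by rw [map_zero]; exact hy.symm⟩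
    · rintro ⟨x, rfl⟩
      rfl

noncomputable def padQ (Q : ModuleCat.{u} Λ) : ℕ → ModuleCat.{u} Λ
  | 0 => Q
  | _+1 => Zmod

noncomputable def padRes {kk : ℕ} {C : ModuleCat.{u} Λ} (r : ARes M₁ kk C)
    (Q : ModuleCat.{u} Λ) (hQ : IsRelProjective (Fall) Q) :
    ARes M₁ kk (ModuleCat.of Λ (↑(r.K 0) × ↑Q)) where
  P n := ModuleCat.of Λ (↑(r.P n) × ↑(padQ Q n))
  K n := ModuleCat.of Λ (↑(r.K n) × ↑(padQ Q n))
  ι n := show ModuleCat.of Λ (↑(r.K (n+1)) × ↑(Zmod (Λ := Λ))) ⟶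
      ModuleCat.of Λ (↑(r.P n) × ↑(padQ Q n)) from
    LinearMap.prodMap ((r.ι n).hom : r.K (n+1) →ₗ[Λ] r.P n) (0 : Zmod (Λ := Λ) ⟶ padQ Q n).hom
  π n := show ModuleCat.of Λ (↑(r.P n) × ↑(padQ Q n)) ⟶
      ModuleCat.of Λ (↑(r.K n) × ↑(padQ Q n)) from
    LinearMap.prodMap ((r.π n).hom : r.P n →ₗ[Λ] r.K n) (ModuleCat.Hom.hom (𝟙 (padQ Q n)))
  ε := Iso.refl (ModuleCat.of Λ (↑(r.K 0) × ↑(padQ Q 0)))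
  ses n := prod_ses (r.ses n) (punit_ses (padQ Q n))
  acy n j hj := by
    refine rv_prod j _ _ ?_ ?_
    · exact fun j' hj' => r.acy n j' (lt_of_le_of_lt hj' hj)
    · rcases n with _ | n
      · exact fun j' _ => rv_of_relproj j' Q hQ
      · exact fun j' _ => rv_of_relproj j' (Zmod (Λ := Λ)) relproj_punit

lemma eco_pad {K P Z W : ModuleCat.{u} Λ} (ι : K ⟶ P) (τ : Z ⟶ W)
    (hZ : ∀ z : ↑Z, z = 0) :
    Nonempty ((Eco M₁ (show ModuleCat.of Λ (↑K × ↑Z) ⟶ ModuleCat.of Λ (↑P × ↑W) from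
      LinearMap.prodMap (ι.hom : K →ₗ[Λ] P) (τ.hom : Z →ₗ[Λ] W))) ≃+ Eco M₁ ι) := by
  set ιpad : ModuleCat.of Λ (↑K × ↑Z) ⟶ ModuleCat.of Λ (↑P × ↑W) :=
    ModuleCat.ofHom (LinearMap.prodMap (ι.hom : K →ₗ[Λ] P) (τ.hom : Z →ₗ[Λ] W)) with hιpad
  set inlK : K ⟶ ModuleCat.of Λ (↑K × ↑Z) := ModuleCat.ofHom (LinearMap.inl Λ ↑K ↑Z) with hinlK
  set fstK : ModuleCat.of Λ (↑K × ↑Z) ⟶ K := ModuleCat.ofHom (LinearMap.fst Λ ↑K ↑Z) with hfstK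
  set Θa : (ModuleCat.of Λ (↑K × ↑Z) ⟶ M₁) →+ (K ⟶ M₁) := homDiff M₁ inlK with hΘa
  have hbij : Function.Bijective Θa := by
    constructor
    · intro h h' hh
      apply hom_ext
      rintro ⟨kk, z⟩
      have h1 : h (kk, 0) = h' (kk, 0) := congrArg (fun φ : K ⟶ M₁ => φ kk) hh
      have hz : z = (0 : ↑Z) := hZ z
      rw [show ((kk, z) : ↑K × ↑Z) = (kk, 0) from by rw [hz]]
      exact h1
    · intro g
      exact ⟨fstK ≫ g, hom_ext fun kk => rfl⟩
  set e := AddEquiv.ofBijective Θa hbij with he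
  have hmap : AddSubgroup.map (e : (ModuleCat.of Λ (↑K × ↑Z) ⟶ M₁) ≃+ (K ⟶ M₁))
      ((homDiff M₁ ιpad).range) = (homDiff M₁ ι).range := by
    apply AddSubgroup.ext
    intro g
    simp only [AddSubgroup.mem_map, AddMonoidHom.mem_range]
    constructor
    · rintro ⟨h, ⟨H, rfl⟩, hh⟩
      refine ⟨(show P ⟶ ModuleCat.of Λ (↑P × ↑W) from LinearMap.inl Λ ↑P ↑W) ≫ H, ?_⟩
      rw [← hh]
      apply hom_ext
      intro kk
      show H ((ι kk, 0) : ↑P × ↑W) = H (ιpad (inlK kk))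
      have : ιpad (inlK kk) = ((ι kk, τ 0) : ↑P × ↑W) := rfl
      rw [this, map_zero]
    · rintro ⟨F, rfl⟩
      refine ⟨homDiff M₁ ιpad ((show ModuleCat.of Λ (↑P × ↑W) ⟶ P from
        LinearMap.fst Λ ↑P ↑W) ≫ F), ⟨_, rfl⟩, ?_⟩
      apply hom_ext
      intro kk
      show F ((ιpad (inlK kk) : ↑P × ↑W).1) = F (ι kk)
      rfl
  exact ⟨QuotientAddGroup.congr _ _ e hmap⟩

lemma bridge_ses {C A P₀ A' Q₀ : ModuleCat.{u} Λ}
    {ιA : A ⟶ P₀} {πA : P₀ ⟶ C} {ι' : A' ⟶ Q₀} {π' : Q₀ ⟶ C}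
    (hA : IsSES ιA πA) (hA' : IsSES ι' π') (hQ₀ : IsRelProjective (Fall) Q₀) :
    ∃ (emb : A' ⟶ ModuleCat.of Λ (↑A × ↑Q₀)) (w : ModuleCat.of Λ (↑A × ↑Q₀) ⟶ P₀)
      (γ : A' ⟶ A) (α : Q₀ ⟶ P₀),
      IsSES emb w ∧ (∀ a', emb a' = ((γ a', ι' a') : ↑A × ↑Q₀)) ∧
      (∀ x : ↑A × ↑Q₀, w x = ιA x.1 + α x.2) ∧ γ ≫ ιA = -(ι' ≫ α) := by
  obtain ⟨α, hα⟩ := hQ₀ ιA πA hA π'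
  have hαap : ∀ qq, πA (α qq) = π' qq := fun qq => congrArg (fun φ : Q₀ ⟶ C => φ qq) hα
  obtain ⟨γ, hγ⟩ := exists_corestrict ιA hA.inj (-(ι' ≫ α)) (by
    intro a'
    apply hA.mem_range_of
    show πA (-(α (ι' a'))) = 0
    rw [map_neg, hαap, hA'.comp_zero, neg_zero])
  have hγap : ∀ a', ιA (γ a') = -(α (ι' a')) := fun a' =>
    congrArg (fun φ : A' ⟶ P₀ => φ a') hγ
  set emb : A' ⟶ ModuleCat.of Λ (↑A × ↑Q₀) :=
    ModuleCat.ofHom ((γ.hom : A' →ₗ[Λ] A).prod (ι'.hom : A' →ₗ[Λ] Q₀)) with hemb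
  set w : ModuleCat.of Λ (↑A × ↑Q₀) ⟶ P₀ :=
    ((ιA.hom : A →ₗ[Λ] P₀).comp (LinearMap.fst Λ ↑A ↑Q₀)) +
    ((α.hom : Q₀ →ₗ[Λ] P₀).comp (LinearMap.snd Λ ↑A ↑Q₀)) with hw
  have hwap : ∀ x : ↑A × ↑Q₀, w x = ιA x.1 + α x.2 := fun x => rfl
  refine ⟨emb, w, γ, α, ⟨?_, ?_, ?_⟩, fun a' => rfl, hwap, hγ⟩
  · intro a' b' hab
    apply hA'.inj
    exact congrArg Prod.snd hab
  · intro p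
    obtain ⟨qq, hq⟩ := hA'.surj (πA p)
    have hker : πA (p - α qq) = 0 := by rw [map_sub, hαap, hq, sub_self]
    obtain ⟨a, ha⟩ := hA.mem_range_of hker
    refine ⟨(a, qq), ?_⟩
    rw [hwap]
    show ιA a + α qq = p
    rw [ha, sub_add_cancel]
  · rintro ⟨a, qq⟩
    constructor
    · intro h0
      have h0' : ιA a + α qq = 0 := h0
      have hπq : π' qq = 0 := by
        have := congrArg πA h0'
        rw [map_add, hA.comp_zero, zero_add, hαap, map_zero] at this
        exact this
      obtain ⟨a', ha'⟩ := hA'.mem_range_of hπq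
      refine ⟨a', ?_⟩
      show ((γ a', ι' a') : ↑A × ↑Q₀) = (a, qq)
      have hιa : ιA (γ a') = ιA a := by
        rw [hγap, ha']
        have : α qq = -(ιA a) := by
          rw [eq_neg_iff_add_eq_zero, add_comm]
          exact h0'
        rw [this, neg_neg]
      rw [hA.inj hιa, ha']
    · rintro ⟨a', ha'⟩
      rw [← ha']
      show w (emb a') = 0
      rw [hwap]
      show ιA (γ a') + α (ι' a') = 0
      rw [hγap, neg_add_cancel]

lemma base_iso {C A P₀ A' Q₀ : ModuleCat.{u} Λ}
    {ιA : A ⟶ P₀} {πA : P₀ ⟶ C} {ι' : A' ⟶ Q₀} {π' : Q₀ ⟶ C}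
    (hA : IsSES ιA πA) (hA' : IsSES ι' π') (hQ₀ : IsRelProjective (Fall) Q₀)
    (hrv0 : relExtVanish (Fall) 0 P₀ M₁) :
    Nonempty (Eco M₁ ιA ≃+ Eco M₁ ι') := by
  obtain ⟨emb, w, γ, α, hsesE, hembap, hwap, hγι⟩ := bridge_ses hA hA' hQ₀
  have hγap : ∀ a', ιA (γ a') = -(α (ι' a')) := fun a' =>
    congrArg (fun φ : A' ⟶ P₀ => φ a') hγι
  set Θ0 : (A ⟶ M₁) →+ Eco M₁ ι' := (Eco.mk ι').comp (homDiff M₁ γ) with hΘ0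
  have hsub : (homDiff M₁ ιA).range ≤ Θ0.ker := by
    rintro _ ⟨H, rfl⟩
    show Eco.mk ι' (γ ≫ (ιA ≫ H)) = 0
    rw [Eco.mk_eq_zero]
    refine ⟨-(α ≫ H), hom_ext fun a' => ?_⟩
    show -(H (α (ι' a'))) = H (ιA (γ a'))
    rw [hγap, map_neg]
  set Θ : Eco M₁ ιA →+ Eco M₁ ι' := QuotientAddGroup.lift _ Θ0 hsub with hΘ
  have hΘmk : ∀ h : A ⟶ M₁, Θ (Eco.mk ιA h) = Eco.mk ι' (γ ≫ h) := fun h => rfl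
  have hsurj : Function.Surjective Θ := by
    intro y
    obtain ⟨h', rfl⟩ := Eco.mk_surjective ι' y
    obtain ⟨H, hH⟩ := ext0 hsesE hrv0 h'
    set h : A ⟶ M₁ := (show A ⟶ ModuleCat.of Λ (↑A × ↑Q₀) from LinearMap.inl Λ ↑A ↑Q₀) ≫ H
      with hh
    refine ⟨Eco.mk ιA h, ?_⟩
    rw [hΘmk]
    have hdiff : h' - γ ≫ h = ι' ≫ ((show Q₀ ⟶ ModuleCat.of Λ (↑A × ↑Q₀) from
        LinearMap.inr Λ ↑A ↑Q₀) ≫ H) := by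
      apply hom_ext
      intro a'
      show h' a' - H ((γ a', 0) : ↑A × ↑Q₀) = H ((0, ι' a') : ↑A × ↑Q₀)
      have hsplit : h' a' = H ((γ a', 0) : ↑A × ↑Q₀) + H ((0, ι' a') : ↑A × ↑Q₀) := by
        have h1 : h' a' = H (emb a') := (congrArg (fun φ : A' ⟶ M₁ => φ a') hH).symm
        rw [h1, hembap a', ← map_add]
        congr 1
        show ((γ a', ι' a') : ↑A × ↑Q₀) = (γ a' + 0, 0 + ι' a')
        rw [add_zero, zero_add]
      rw [hsplit]
      abel
    have : Eco.mk ι' (h' - γ ≫ h) = 0 := by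
      rw [Eco.mk_eq_zero]
      exact ⟨_, hdiff.symm⟩
    have hmk : Eco.mk ι' h' - Eco.mk ι' (γ ≫ h) = 0 := by
      rw [← map_sub]
      exact this
    exact (sub_eq_zero.mp hmk).symm
  have hinj : Function.Injective Θ := by
    rw [injective_iff_map_eq_zero]
    intro x hx
    obtain ⟨h, rfl⟩ := Eco.mk_surjective ιA x
    rw [hΘmk, Eco.mk_eq_zero] at hx
    obtain ⟨f', hf'⟩ := hx
    rw [Eco.mk_eq_zero]
    set χ : ModuleCat.of Λ (↑A × ↑Q₀) ⟶ M₁ :=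
      ((h.hom : A →ₗ[Λ] M₁).comp (LinearMap.fst Λ ↑A ↑Q₀)) -
      ((f'.hom : Q₀ →ₗ[Λ] M₁).comp (LinearMap.snd Λ ↑A ↑Q₀)) with hχ
    have hker : ∀ x, w x = 0 → χ x = 0 := by
      intro x hx0
      obtain ⟨a', ha'⟩ := hsesE.mem_range_of hx0
      rw [← ha', hembap a']
      show h (γ a') - f' (ι' a') = 0
      have h1 : f' (ι' a') = (ι' ≫ f') a' := rfl
      rw [h1, hf']
      show h (γ a') - h (γ a') = 0
      rw [sub_self]
    obtain ⟨g, hg⟩ := exists_desc w hsesE.surj χ hker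
    refine ⟨g, hom_ext fun a => ?_⟩
    have h1 : χ ((a, 0) : ↑A × ↑Q₀) = g (w ((a, 0) : ↑A × ↑Q₀)) :=
      (congrArg (fun φ : ModuleCat.of Λ (↑A × ↑Q₀) ⟶ M₁ => φ ((a, 0) : ↑A × ↑Q₀)) hg).symm
    have h2 : χ ((a, 0) : ↑A × ↑Q₀) = h a := by
      show h a - f' 0 = h a
      rw [map_zero, sub_zero]
    have h3 : w ((a, 0) : ↑A × ↑Q₀) = ιA a := by
      rw [hwap]
      show ιA a + α 0 = ιA a
      rw [map_zero, add_zero]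
    show g (ιA a) = h a
    rw [← h3, ← h1, h2]
  exact ⟨(AddEquiv.ofBijective Θ ⟨hinj, hsurj⟩)⟩

lemma mainm (M₁ : ModuleCat.{u} Λ) (kk : ℕ) : ∀ (i : ℕ), i < kk →
    ∀ (C : ModuleCat.{u} Λ) (r : ARes M₁ kk C) (q : RelResolution (Fall (Λ := Λ)) C),
    Nonempty (Eco M₁ (r.ι i) ≃+ Eco M₁ (q.ι i)) := by
  intro i
  induction i with
  | zero =>
    intro h0 C r q
    exact base_iso ((r.ses 0).comp_iso r.ε) ((q.fex 0).comp_iso q.ε) (q.proj 0)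
      (r.acy 0 0 h0)
  | succ i ih =>
    intro hik C r q
    have hi : i < kk := Nat.lt_of_succ_lt hik
    obtain ⟨emb, w, γ, α, hsesE, hembap, hwap, hγι⟩ :=
      bridge_ses ((r.ses 0).comp_iso r.ε) ((q.fex 0).comp_iso q.ε) (q.proj 0)
    set s₀ : SESD.{u} Λ :=
      ⟨q.K 1, ModuleCat.of Λ (↑(r.K 1) × ↑(q.P 0)), r.P 0, emb, w, hsesE⟩ with hs₀
    obtain ⟨eH⟩ := horseshoe_iso (M₁ := M₁) s₀ i (r.acy 0 i hi) (r.acy 0 (i+1) hik)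
    obtain ⟨ePad⟩ := eco_pad (M₁ := M₁) (r.shift.ι i) (0 : Zmod (Λ := Λ) ⟶ padQ (q.P 0) i)
      (fun z => @Subsingleton.elim PUnit.{u+1} _ z 0)
    obtain ⟨e1⟩ := ih hi (ModuleCat.of Λ (↑(r.K 1) × ↑(q.P 0)))
      (padRes r.shift (q.P 0) (q.proj 0)) (hresB s₀)
    obtain ⟨e2⟩ := ih hi (q.K 1) (ARes.ofRel M₁ kk (hresK s₀)) q.shift
    exact ⟨(((ePad.symm.trans e1).trans eH).trans e2 :
      Eco M₁ (r.ι (i+1)) ≃+ Eco M₁ (q.ι (i+1)))⟩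

end MainInduction

end RelHom

open RelHom in
/-- If `M₂` is a generator, `M₁` a cogenerator and `Ext^i(M₂,M₁) = 0` for `0 < i ≤ k`, then
for every module `C` the relative groups `Ext^i_(F_(M₂))(C, M₁)` (computed from any
`F_(M₂)`-projective resolution) agree with the absolute `Ext^i_Λ(C, M₁)` (computed from any
ordinary projective resolution), for `0 < i ≤ k`. -/
theorem stmt9 (R : Type) [CommRing R] [IsArtinianRing R] (Λ : Type) [Ring Λ] [Algebra R Λ]
    [Module.Finite R Λ]
    (M₁ M₂ : ModuleCat Λ) (h1fg : Module.Finite Λ M₁) (h2fg : Module.Finite Λ M₂)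
    (hgen : IsGenerator M₂) (hcog : IsCogenerator M₁)
    (k : ℕ) (hk : 0 < k)
    (hvan : extVanishUpTo Fall k M₂ M₁) :
    ∀ C : ModuleCat Λ, Module.Finite Λ C →
      ∀ (res : RelResolution (FM M₂) C) (qres : RelResolution (Fall) C),
        ∀ i < k, Nonempty (res.cohomologySucc M₁ i ≃+ qres.cohomologySucc M₁ i) := by
  intro C hC res qres i hik
  have hses_res : ∀ n, IsSES (res.ι n) (res.π n) := fun n => (res.fex n).1
  have hses_q : ∀ n, IsSES (qres.ι n) (qres.π n) := fun n => qres.fex n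
  obtain ⟨e1⟩ := cohomIso res hses_res M₁ i
  obtain ⟨e2⟩ := cohomIso qres hses_q M₁ i
  set r : ARes M₁ k C :=
    { P := res.P, K := res.K, ι := res.ι, π := res.π, ε := res.ε,
      ses := hses_res,
      acy := fun n j hj => rv_FMproj (res.proj n) k (fun j' hj' => hvan j' hj') j hj }
    with hr
  obtain ⟨em⟩ := mainm M₁ k i hik C r qres
  exact ⟨e1.trans (em.trans e2.symm)⟩
end

section
/- Let M₂ be a generator and M₁ a cogenerator for mod Λ, and k a positive integer. If Ext^i_{F_{M₂}}(C, M₁) ≅ Ext^i_Λ(C, M₁) for every Λ-module C and all 0 < i ≤ k, then Ext^i_Λ(M₂, M₁) = 0 for 0 < i ≤ k. -/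
open CategoryTheory

universe u
variable {Λ : Type} [Ring Λ]

namespace RelHom

universe v
variable {Λ : Type} [Ring Λ]

lemma exact_comp_surjective {A A' B C : Type*} [Zero C] {e : A' → A} {f : A → B} {g : B → C}
    (h : Function.Exact f g) (he : Function.Surjective e) : Function.Exact (f ∘ e) g := by
  intro y
  constructor
  · intro hy
    obtain ⟨x, hx⟩ := (h y).mp hy
    obtain ⟨z, rfl⟩ := he x
    exact ⟨z, hx⟩
  · rintro ⟨z, hz⟩
    exact (h y).mpr ⟨e z, hz⟩

lemma quot_subsingleton {G : Type*} [AddGroup G] [Subsingleton G] (H : AddSubgroup G)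
    [H.Normal] : Subsingleton (G ⧸ H) := by
  constructor
  intro a b
  obtain ⟨x, rfl⟩ := QuotientAddGroup.mk_surjective a
  obtain ⟨y, rfl⟩ := QuotientAddGroup.mk_surjective b
  exact congrArg _ (Subsingleton.elim x y)

/-- Splice a SES `K → P → X` (with `P` projective) with a resolution of `K`. -/
noncomputable def RelResolution.splice {X K P : ModuleCat.{v} Λ}
    (i : K ⟶ P) (p : P ⟶ X) (hF : Fall K P X i p) (hP : IsRelProjective (Fall) P)
    (q : RelResolution (Fall) K) : RelResolution (Fall) X where
  P n := match n with | 0 => P | m+1 => q.P m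
  K n := match n with | 0 => X | m+1 => q.K m
  ι n := match n with | 0 => q.ε.hom ≫ i | m+1 => q.ι m
  π n := match n with | 0 => p | m+1 => q.π m
  ε := Iso.refl X
  proj n := match n with | 0 => hP | m+1 => q.proj m
  fex n := match n with
    | 0 => by
        have hS : IsSES i p := hF
        have hinv : ∀ x, q.ε.inv (q.ε.hom x) = x := fun x =>
          congrArg (fun (f : q.K 0 ⟶ q.K 0) => f x) q.ε.hom_inv_id
        have hsur : Function.Surjective ⇑q.ε.hom := fun y =>
          ⟨q.ε.inv y, congrArg (fun (f : K ⟶ K) => f y) q.ε.inv_hom_id⟩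
        have hinj : Function.Injective ⇑q.ε.hom := fun a b hab => by
          rw [← hinv a, hab, hinv]
        refine ⟨?_, hS.surj, ?_⟩
        · show Function.Injective (⇑i ∘ ⇑q.ε.hom)
          exact hS.inj.comp hinj
        · show Function.Exact (⇑i ∘ ⇑q.ε.hom) ⇑p
          exact exact_comp_surjective hS.exact hsur
    | m+1 => q.fex m

/-- A free cover of a module, with its kernel. -/
structure Cover (A : ModuleCat.{v} Λ) where
  P : ModuleCat.{v} Λ
  π : P ⟶ A
  K : ModuleCat.{v} Λ
  ι : K ⟶ P
  fex : Fall K P A ι π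
  proj : IsRelProjective (Fall : ExtPred Λ) P

noncomputable def cover (A : ModuleCat.{v} Λ) : Cover A where
  P := ModuleCat.of Λ (A →₀ Λ)
  π := ModuleCat.ofHom (Finsupp.linearCombination Λ (id : A → A) : (A →₀ Λ) →ₗ[Λ] A)
  K := ModuleCat.of Λ (LinearMap.ker (Finsupp.linearCombination Λ (id : A → A)))
  ι := ModuleCat.ofHom (LinearMap.ker (Finsupp.linearCombination Λ (id : A → A))).subtype
  fex := by
    refine ⟨?_, ?_, ?_⟩
    · exact Subtype.coe_injective
    · intro a
      refine ⟨Finsupp.single a 1, ?_⟩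
      show Finsupp.linearCombination Λ (id : A → A) (Finsupp.single a 1) = a
      simp
    · intro y
      constructor
      · intro hy
        exact ⟨⟨y, hy⟩, rfl⟩
      · rintro ⟨⟨x, hx⟩, rfl⟩
        exact hx
  proj := by
    intro A' B C i p hF f
    have hS : IsSES i p := hF
    haveI : Module.Projective Λ ↑(ModuleCat.of Λ (A →₀ Λ)) :=
      inferInstanceAs (Module.Projective Λ (A →₀ Λ))
    obtain ⟨h, hh⟩ := Module.projective_lifting_property
      p.hom f.hom hS.surj
    exact ⟨ModuleCat.ofHom h, ModuleCat.hom_ext hh⟩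

/-- Syzygies of the free resolution. -/
noncomputable def syz (X : ModuleCat.{v} Λ) : ℕ → ModuleCat.{v} Λ
  | 0 => X
  | n+1 => (cover (syz X n)).K

/-- The free resolution of an arbitrary module. -/
noncomputable def freeRes (X : ModuleCat.{v} Λ) : RelResolution (Fall : ExtPred Λ) X where
  P n := (cover (syz X n)).P
  K n := syz X n
  ι n := (cover (syz X n)).ι
  π n := (cover (syz X n)).π
  ε := Iso.refl X
  proj n := (cover (syz X n)).proj
  fex n := (cover (syz X n)).fex

/-- Modules of the trivial relative resolution of `M`. -/
noncomputable def trivPt (M : ModuleCat.{v} Λ) : ℕ → ModuleCat.{v} Λ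
  | 0 => M
  | _+1 => ModuleCat.of Λ PUnit

instance (M : ModuleCat.{v} Λ) (n : ℕ) : Subsingleton ↑(trivPt M (n+1)) :=
  inferInstanceAs (Subsingleton PUnit)

/-- The trivial `F_M`-projective resolution of `M`. -/
noncomputable def trivRes (M : ModuleCat.{v} Λ) : RelResolution (FM M) M where
  P := trivPt M
  K := trivPt M
  ι _ := 0
  π n := 𝟙 (trivPt M n)
  ε := Iso.refl M
  proj n := match n with
    | 0 => by
        intro A B C i p hF f
        exact hF.2 f
    | m+1 => by
        intro A B C i p hF f
        refine ⟨0, ?_⟩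
        ext x
        rw [Subsingleton.elim x 0, map_zero, map_zero]
  fex n := by
    refine ⟨⟨?_, fun y => ⟨y, rfl⟩, ?_⟩, fun f => ⟨f, Category.comp_id f⟩⟩
    · exact fun a b _ => Subsingleton.elim a b
    · intro y
      constructor
      · intro hy
        refine ⟨0, ?_⟩
        rw [map_zero]
        exact (show y = 0 from hy).symm
      · rintro ⟨x, rfl⟩
        show (𝟙 (trivPt M n)) ((0 : trivPt M (n+1) ⟶ trivPt M n) x) = 0
        rw [Subsingleton.elim x 0, map_zero, map_zero]

lemma trivRes_subsingleton (M M₁ : ModuleCat.{v} Λ) (n : ℕ) :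
    Subsingleton ((trivRes M).cohomologySucc M₁ n) := by
  haveI h0 : Subsingleton ↑((trivRes M).P (n+1)) := inferInstanceAs (Subsingleton PUnit)
  haveI h1 : Subsingleton ((trivRes M).P (n+1) ⟶ M₁) := by
    constructor
    intro f g
    ext x
    rw [Subsingleton.elim x 0, map_zero, map_zero]
  haveI h2 : Subsingleton (AddMonoidHom.ker (homDiff M₁ ((trivRes M).d (n+1)))) :=
    inferInstance
  exact quot_subsingleton _

lemma relExtVanish_of_subsingleton (M₁ : ModuleCat.{v} Λ) :
    ∀ (n : ℕ) (X : ModuleCat.{v} Λ),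
      (∀ qres : RelResolution (Fall : ExtPred Λ) X,
        Subsingleton (qres.cohomologySucc M₁ n)) →
      relExtVanish (Fall : ExtPred Λ) n X M₁ := by
  intro n
  induction n with
  | succ n ih =>
    intro X h K P i p hF hP
    exact ih K (fun q => h (RelResolution.splice i p hF hP q))
  | zero =>
    intro X h B i p hF
    have hS : IsSES i p := hF
    haveI hsub : Subsingleton ((freeRes X).cohomologySucc M₁ 0) := h (freeRes X)
    have hfex0 : IsSES ((freeRes X).ι 0) ((freeRes X).π 0) := (freeRes X).fex 0
    have hfex1 : IsSES ((freeRes X).ι 1) ((freeRes X).π 1) := (freeRes X).fex 1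
    -- the augmentation (note `(freeRes X).K 0 = X` definitionally)
    have π0 : (freeRes X).P 0 ⟶ X := (freeRes X).π 0
    -- lift the augmentation through `p`
    obtain ⟨φ, hφ⟩ := (freeRes X).proj 0 i p hF ((freeRes X).π 0 : (freeRes X).P 0 ⟶ X)
    have hφx : ∀ x, p (φ x) = ((freeRes X).π 0 : (freeRes X).P 0 ⟶ X) x :=
      fun x => congrArg (fun (f : (freeRes X).P 0 ⟶ X) => f x) hφ
    -- `φ ∘ ι0` lands in the image of `i`
    have hland : ∀ y : (freeRes X).K 1, φ ((freeRes X).ι 0 y) ∈ Set.range ⇑i := by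
      intro y
      apply (hS.exact _).mp
      rw [hφx]
      exact hfex0.exact.apply_apply_eq_zero y
    -- factor through `i`
    let e : ↑M₁ ≃ₗ[Λ] ↥(LinearMap.range i.hom) :=
      LinearEquiv.ofInjective i.hom hS.inj
    let ψ' : (freeRes X).K 1 ⟶ M₁ := ModuleCat.ofHom (
      (e.symm : ↥(LinearMap.range i.hom) →ₗ[Λ] ↑M₁) ∘ₗ
        LinearMap.codRestrict _ (((freeRes X).ι 0 ≫ φ : (freeRes X).K 1 ⟶ B).hom) (fun y => hland y))
    have hψ'i : ∀ y, i (ψ' y) = φ ((freeRes X).ι 0 y) := by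
      intro y
      show i (e.symm ⟨φ ((freeRes X).ι 0 y), hland y⟩) = φ ((freeRes X).ι 0 y)
      have h1 : ↑(e (e.symm ⟨φ ((freeRes X).ι 0 y), hland y⟩)) = φ ((freeRes X).ι 0 y) :=
        congrArg Subtype.val (e.apply_symm_apply ⟨φ ((freeRes X).ι 0 y), hland y⟩)
      have h2 : (↑(e (e.symm ⟨φ ((freeRes X).ι 0 y), hland y⟩)) : ↑B) =
          i (e.symm ⟨φ ((freeRes X).ι 0 y), hland y⟩) :=
        LinearEquiv.ofInjective_apply _ _
      rw [← h2]
      exact h1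
    -- the cocycle
    let ψ : (freeRes X).P 1 ⟶ M₁ := (freeRes X).π 1 ≫ ψ'
    have hψker : homDiff M₁ ((freeRes X).d 1) ψ = 0 := by
      show (freeRes X).d 1 ≫ ψ = 0
      ext x
      show ψ' ((freeRes X).π 1 ((freeRes X).ι 1 ((freeRes X).π 2 x))) = 0
      rw [hfex1.exact.apply_apply_eq_zero, map_zero]
    -- it is a coboundary
    have hcob : ∃ g : (freeRes X).P 0 ⟶ M₁, homDiff M₁ ((freeRes X).d 0) g = ψ := by
      have h0 : ((⟨ψ, hψker⟩ : AddMonoidHom.ker (homDiff M₁ ((freeRes X).d 1))) :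
          (freeRes X).cohomologySucc M₁ 0) = ((0 : AddMonoidHom.ker (homDiff M₁ ((freeRes X).d 1))) :
          (freeRes X).cohomologySucc M₁ 0) := Subsingleton.elim _ _
      rw [QuotientAddGroup.mk_zero, QuotientAddGroup.eq_zero_iff] at h0
      exact AddSubgroup.mem_addSubgroupOf.mp h0
    obtain ⟨g, hg⟩ := hcob
    have hgx : ∀ y : (freeRes X).K 1, g ((freeRes X).ι 0 y) = ψ' y := by
      intro y
      obtain ⟨x, rfl⟩ := hfex1.surj y
      have := congrArg (fun (f : (freeRes X).P 1 ⟶ M₁) => f x) hg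
      exact this
    -- θ kills the kernel of π0 and factors through X
    let θ : ↑((freeRes X).P 0) →ₗ[Λ] ↑B := φ.hom -
      (i.hom ∘ₗ g.hom)
    have hθι : ∀ y : (freeRes X).K 1, θ ((freeRes X).ι 0 y) = 0 := by
      intro y
      show φ ((freeRes X).ι 0 y) - i (g ((freeRes X).ι 0 y)) = 0
      rw [hgx y, hψ'i y, sub_self]
    let π0' : ↑((freeRes X).P 0) →ₗ[Λ] ↑X := ((freeRes X).π 0 : (freeRes X).P 0 ⟶ X).hom
    have hπ0surj : Function.Surjective ⇑π0' := hfex0.surj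
    have hle : LinearMap.ker π0' ≤ LinearMap.ker θ := by
      intro x hx
      obtain ⟨y, rfl⟩ := (hfex0.exact x).mp hx
      exact hθι y
    let s : ↑X →ₗ[Λ] ↑B := (LinearMap.ker π0').liftQ θ hle ∘ₗ
      (π0'.quotKerEquivOfSurjective hπ0surj).symm.toLinearMap
    have hs : ∀ z, s (π0' z) = θ z := by
      intro z
      have h1 : (π0'.quotKerEquivOfSurjective hπ0surj) (Submodule.Quotient.mk z) = π0' z := by
        simp [LinearMap.quotKerEquivOfSurjective]
      have h2 : (π0'.quotKerEquivOfSurjective hπ0surj).symm (π0' z) = Submodule.Quotient.mk z :=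
        (LinearEquiv.symm_apply_eq _).mpr h1.symm
      show (LinearMap.ker π0').liftQ θ hle ((π0'.quotKerEquivOfSurjective hπ0surj).symm (π0' z)) = θ z
      rw [h2, Submodule.liftQ_apply]
    -- s is a section of p
    have hps : ∀ x : X, p (s x) = x := by
      intro x
      obtain ⟨z, rfl⟩ := hπ0surj x
      rw [hs z]
      show p (φ z - i (g z)) = π0' z
      rw [map_sub, hS.exact.apply_apply_eq_zero, sub_zero, hφx]
      rfl
    -- the retraction of i
    let t : ↑B →ₗ[Λ] ↑B := LinearMap.id - ((s : ↑X →ₗ[Λ] ↑B) ∘ₗ p.hom)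
    have htr : ∀ b, t b ∈ Set.range ⇑i := by
      intro b
      apply (hS.exact _).mp
      show p (b - s (p b)) = 0
      rw [map_sub, hps, sub_self]
    let r : B ⟶ M₁ := ModuleCat.ofHom (
      (e.symm : ↥(LinearMap.range i.hom) →ₗ[Λ] ↑M₁) ∘ₗ
        LinearMap.codRestrict _ t (fun b => htr b))
    refine ⟨r, ?_⟩
    ext m
    show e.symm ⟨t (i m), htr (i m)⟩ = m
    have ht : t (i m) = i m := by
      show i m - s (p (i m)) = i m
      rw [hS.exact.apply_apply_eq_zero, map_zero, sub_zero]
    have hem : e m = ⟨t (i m), htr (i m)⟩ := by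
      apply Subtype.ext
      show (↑(e m) : ↑B) = t (i m)
      rw [ht]
      exact (LinearEquiv.ofInjective_apply _ _)
    rw [← hem, LinearEquiv.symm_apply_apply]

end RelHom

open RelHom in
/-- If the relative groups `Ext^i_(F_(M₂))(C, M₁)` agree with the absolute `Ext^i_Λ(C, M₁)`
for every `C` and all `0 < i ≤ k`, then `Ext^i_Λ(M₂, M₁) = 0` for `0 < i ≤ k`. -/
theorem stmt10 (R : Type) [CommRing R] [IsArtinianRing R] (Λ : Type) [Ring Λ] [Algebra R Λ]
    [Module.Finite R Λ]
    (M₁ M₂ : ModuleCat Λ) (h1fg : Module.Finite Λ M₁) (h2fg : Module.Finite Λ M₂)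
    (hgen : IsGenerator M₂) (hcog : IsCogenerator M₁)
    (k : ℕ) (hk : 0 < k)
    (hiso : ∀ C : ModuleCat Λ, Module.Finite Λ C →
      ∀ (res : RelResolution (FM M₂) C) (qres : RelResolution (Fall) C),
        ∀ i < k, Nonempty (res.cohomologySucc M₁ i ≃+ qres.cohomologySucc M₁ i)) :
    extVanishUpTo Fall k M₂ M₁ := by
  intro n hn
  apply RelHom.relExtVanish_of_subsingleton
  intro qres
  obtain ⟨e⟩ := hiso M₂ h2fg (RelHom.trivRes M₂) qres n hn
  haveI := RelHom.trivRes_subsingleton M₂ M₁ n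
  exact Equiv.subsingleton e.toEquiv.symm
end
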